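/- arXiv:2105.13750 — 2 statements merged into one kernel-verified Lean document; each statement's English description precedes it below -/
import Mathlib

section
/- Let Λ = (λ^0,…,λ^{k-1}) be a tuple of partitions with ℓ total cells. The map φ sending a pair (α, 𝒯), where α = (α_1,…,α_{ℓ-1}) is a weak composition and 𝒯 is a standard Young tableau tuple of shapes Λ, to the semistandard filling in which the cell of 𝒯 containing s receives the entry 1 + d_s + Σ_{i=1}^{s-1} α_i (with d_s the number of descents of 𝒯 less than s), is a bijection onto the set of semistandard Young tableau tuples of shapes Λ containing at least one entry equal to 1. Moreover |α| + |DES(𝒯)| + 1 equals the maximal entry of φ(α,𝒯), and the index of the leftmost tableau containing 1 is the same in 𝒯 and φ(α,𝒯). -/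
open Finset Polynomial PowerSeries
open scoped Classical

namespace BorderStrips

/-- Two cells of a Young diagram are adjacent if they share an edge. -/
def Adj (x y : ℕ × ℕ) : Prop :=
  (x.1 = y.1 ∧ (x.2 = y.2 + 1 ∨ y.2 = x.2 + 1)) ∨
  (x.2 = y.2 ∧ (x.1 = y.1 + 1 ∨ y.1 = x.1 + 1))

/-- A set of cells is connected: any two cells are joined by a path of adjacent cells. -/
def ConnectedCells (S : Finset (ℕ × ℕ)) : Prop :=
  ∀ x ∈ S, ∀ y ∈ S, Relation.ReflTransGen (fun a b => a ∈ S ∧ b ∈ S ∧ Adj a b) x y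

/-- A set of cells contains no 2×2 square. -/
def NoTwoByTwo (S : Finset (ℕ × ℕ)) : Prop :=
  ¬ ∃ i j : ℕ, (i, j) ∈ S ∧ (i + 1, j) ∈ S ∧ (i, j + 1) ∈ S ∧ (i + 1, j + 1) ∈ S

/-- `mu ⊆ lam` and `lam \ mu` is a border strip (connected, no 2×2 square) of size `k`. -/
def IsBorderStripOfSize (k : ℕ) (mu lam : YoungDiagram) : Prop :=
  mu.cells ⊆ lam.cells ∧ (lam.cells \ mu.cells).card = k ∧
    ConnectedCells (lam.cells \ mu.cells) ∧ NoTwoByTwo (lam.cells \ mu.cells)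

/-- Height of a strip: number of rows spanned minus one. -/
def stripHeight (S : Finset (ℕ × ℕ)) : ℕ := (S.image Prod.fst).card - 1

/-- Content of a cell: column minus row. -/
def contentZ (x : ℕ × ℕ) : ℤ := (x.2 : ℤ) - (x.1 : ℤ)

/-- A tail of a strip: a cell of minimal content. -/
def IsTail (S : Finset (ℕ × ℕ)) (x : ℕ × ℕ) : Prop :=
  x ∈ S ∧ ∀ y ∈ S, contentZ x ≤ contentZ y

noncomputable def tailCell (S : Finset (ℕ × ℕ)) : ℕ × ℕ :=
  if h : ∃ x, IsTail S x then h.choose else (0, 0)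

/-- A border strip tableau of shape `lam` with `m` strips, each of size `k`,
viewed as a flag of Young diagrams. (For `k = 1`, `m = |lam|` these are exactly
the standard Young tableaux of shape `lam`.) -/
structure BST (lam : YoungDiagram) (k m : ℕ) where
  flag : Fin (m + 1) → YoungDiagram
  first : flag 0 = ⊥
  last : flag (Fin.last m) = lam
  strips : ∀ i : Fin m, IsBorderStripOfSize k (flag i.castSucc) (flag i.succ)

namespace BST

variable {lam : YoungDiagram} {k m : ℕ}

def flagAt (B : BST lam k m) (i : ℕ) : YoungDiagram :=
  B.flag ⟨min i m, by omega⟩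

/-- The cells of the strip labelled `i` (labels are 1-based). -/
def stripCells (B : BST lam k m) (i : ℕ) : Finset (ℕ × ℕ) :=
  (B.flagAt i).cells \ (B.flagAt (i - 1)).cells

/-- The height of a border strip tableau: sum of the heights of its strips. -/
def height (B : BST lam k m) : ℕ :=
  ∑ i ∈ Finset.Icc 1 m, stripHeight (B.stripCells i)

/-- `i` is a descent of `B` if the tail of strip `i+1` lies in a strictly lower
row than the tail of strip `i`. -/
noncomputable def DES (B : BST lam k m) : Finset ℕ :=
  (Finset.Icc 1 (m - 1)).filter fun i =>
    (tailCell (B.stripCells i)).1 < (tailCell (B.stripCells (i + 1))).1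

/-- Major index: sum of the descents. -/
noncomputable def maj (B : BST lam k m) : ℕ := ∑ i ∈ B.DES, i

end BST

/-- No border strip of size `k` can be removed from `lam`. -/
def NoRemovableStrip (k : ℕ) (lam : YoungDiagram) : Prop :=
  ¬ ∃ mu : YoungDiagram, IsBorderStripOfSize k mu lam

/-- `lam` has empty `k`-core: removing border strips of size `k` as long as
possible always terminates at the empty diagram. -/
def EmptyKCore (k : ℕ) (lam : YoungDiagram) : Prop :=
  ∀ mu : YoungDiagram,
    Relation.ReflTransGen (fun a b => IsBorderStripOfSize k b a) lam mu →
    NoRemovableStrip k mu → mu = ⊥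

/-- Number of rows after padding to a multiple of `k`. -/
def numRowsPad (k : ℕ) (lam : YoungDiagram) : ℕ :=
  k * ((lam.colLen 0 + k - 1) / k)

/-- The beta-set (first column hook lengths after padding): the positions of
the east steps in the contour path of `lam`. -/
def betaSet (k : ℕ) (lam : YoungDiagram) : Finset ℕ :=
  (Finset.range (numRowsPad k lam)).image fun i =>
    lam.rowLen i + (numRowsPad k lam - 1 - i)

/-- The cells of the partition encoded by a beta-set `S`: the element `b` of
rank `r` from the top (i.e. with `r` larger elements) gives a row of length
`b` minus the number of smaller elements. -/
def cellsOfBetaSet (S : Finset ℕ) : Finset (ℕ × ℕ) :=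
  S.biUnion fun b =>
    (Finset.range (b - (S.filter fun b' => b' < b).card)).image
      fun j => ((S.filter fun b' => b < b').card, j)

/-- The `s`-th component of the `k`-quotient of `lam` (as a set of cells):
obtained from the steps of the contour path whose labels are `≡ s (mod k)`. -/
def kQuotientCells (k : ℕ) (lam : YoungDiagram) (s : Fin k) : Finset (ℕ × ℕ) :=
  cellsOfBetaSet (((betaSet k lam).filter fun b => b % k = (s : ℕ)).image fun b => b / k)

/-- Hook length of a cell in a cell set: arm + leg + 1. -/
def hookFin (s : Finset (ℕ × ℕ)) (x : ℕ × ℕ) : ℕ :=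
  (s.filter fun y => y.1 = x.1 ∧ x.2 < y.2).card +
  (s.filter fun y => y.2 = x.2 ∧ x.1 < y.1).card + 1

def hookMultiset (s : Finset (ℕ × ℕ)) : Multiset ℕ := s.val.map (hookFin s)

def contentMultiset (s : Finset (ℕ × ℕ)) : Multiset ℤ := s.val.map contentZ

/-- A semistandard filling of a cell set (entries 0-based): rows weakly
increasing, columns strictly increasing, zero outside. -/
def IsSsyt (s : Finset (ℕ × ℕ)) (f : ℕ × ℕ → ℕ) : Prop :=
  (∀ i j1 j2, j1 ≤ j2 → (i, j1) ∈ s → (i, j2) ∈ s → f (i, j1) ≤ f (i, j2)) ∧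
  (∀ i1 i2 j, i1 < i2 → (i1, j) ∈ s → (i2, j) ∈ s → f (i1, j) < f (i2, j)) ∧
  (∀ x, x ∉ s → f x = 0)

/-- The principal specialisation `s_lam(1, q, …, q^(m-1))` (so `m` variables):
sum over semistandard tableaux with entries `< m` of `q ^ (sum of entries)`. -/
noncomputable def schurSpec (lam : YoungDiagram) (m : ℕ) (q : ℂ) : ℂ :=
  ∑ᶠ f : {f : ℕ × ℕ → ℕ // IsSsyt lam.cells f ∧ ∀ x ∈ lam.cells, f x < m},
    q ^ (∑ x ∈ lam.cells, f.1 x)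

/-- `s_lam(1, q, …, q^m)` as a polynomial in `q`. -/
noncomputable def schurPoly (lam : YoungDiagram) (m : ℕ) : Polynomial ℤ :=
  ∑ᶠ f : {f : ℕ × ℕ → ℕ // IsSsyt lam.cells f ∧ ∀ x ∈ lam.cells, f x ≤ m},
    Polynomial.X ^ (∑ x ∈ lam.cells, f.1 x)

/-- `s_lam(1^m)`: the number of semistandard tableaux with entries `< m`
(i.e. with entries in `{1, …, m}` in 1-based convention). -/
noncomputable def ssytCount (s : Finset (ℕ × ℕ)) (m : ℕ) : ℕ :=
  Nat.card {f : ℕ × ℕ → ℕ // IsSsyt s f ∧ ∀ x ∈ s, f x < m}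

variable {k : ℕ}

/-- A standard Young tableau tuple: a bijective filling of the cells of the
tuple `Λ` with `1, …, ℓ`, strictly increasing along rows and columns. -/
def IsSYTTuple (Λ : Fin k → Finset (ℕ × ℕ)) (f : Fin k → ℕ × ℕ → ℕ) : Prop :=
  (∀ s x, x ∉ Λ s → f s x = 0) ∧
  (∀ s x, x ∈ Λ s → f s x ∈ Finset.Icc 1 (∑ t, (Λ t).card)) ∧
  (∀ v ∈ Finset.Icc 1 (∑ t, (Λ t).card),
    ∃! p : Fin k × ℕ × ℕ, p.2 ∈ Λ p.1 ∧ f p.1 p.2 = v) ∧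
  (∀ s i j1 j2, j1 < j2 → (i, j1) ∈ Λ s → (i, j2) ∈ Λ s → f s (i, j1) < f s (i, j2)) ∧
  (∀ s i1 i2 j, i1 < i2 → (i1, j) ∈ Λ s → (i2, j) ∈ Λ s → f s (i1, j) < f s (i2, j))

/-- A semistandard Young tableau tuple (entries 1-based, zero outside). -/
def IsSSYTTuple (Λ : Fin k → Finset (ℕ × ℕ)) (f : Fin k → ℕ × ℕ → ℕ) : Prop :=
  (∀ s x, x ∉ Λ s → f s x = 0) ∧
  (∀ s x, x ∈ Λ s → 1 ≤ f s x) ∧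
  (∀ s i j1 j2, j1 ≤ j2 → (i, j1) ∈ Λ s → (i, j2) ∈ Λ s → f s (i, j1) ≤ f s (i, j2)) ∧
  (∀ s i1 i2 j, i1 < i2 → (i1, j) ∈ Λ s → (i2, j) ∈ Λ s → f s (i1, j) < f s (i2, j))

/-- `v` is a descent of the tuple filling `f`: with `v` in tableau `s` and `v+1`
in tableau `t`, either `s ≤ t` and `c(v) > c(v+1)`, or `s > t` and `c(v) ≥ c(v+1)`. -/
def TupleDescent (Λ : Fin k → Finset (ℕ × ℕ)) (f : Fin k → ℕ × ℕ → ℕ) (v : ℕ) : Prop :=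
  ∃ (s t : Fin k) (x y : ℕ × ℕ), x ∈ Λ s ∧ y ∈ Λ t ∧ f s x = v ∧ f t y = v + 1 ∧
    ((s ≤ t ∧ contentZ y < contentZ x) ∨ (t < s ∧ contentZ y ≤ contentZ x))

noncomputable def tupleDES (Λ : Fin k → Finset (ℕ × ℕ)) (f : Fin k → ℕ × ℕ → ℕ) : Finset ℕ :=
  (Finset.range (∑ t, (Λ t).card)).filter fun v => TupleDescent Λ f v

/-- `idx₁ = k - 1 - s` where `s` is the index of the leftmost tableau containing
an entry equal to `1`. -/
noncomputable def idxOne (Λ : Fin k → Finset (ℕ × ℕ)) (f : Fin k → ℕ × ℕ → ℕ) : ℕ :=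
  k - 1 - sInf {s : ℕ | ∃ hs : s < k, ∃ x ∈ Λ ⟨s, hs⟩, f ⟨s, hs⟩ x = 1}

def maxEntry (Λ : Fin k → Finset (ℕ × ℕ)) (f : Fin k → ℕ × ℕ → ℕ) : ℕ :=
  Finset.univ.sup fun s => (Λ s).sup fun x => f s x

/-- The map `φ`: the cell of `𝒯` containing `s` receives the entry
`1 + d_s + α_1 + ⋯ + α_(s-1)`. -/
noncomputable def phi (Λ : Fin k → Finset (ℕ × ℕ))
    (p : (ℕ → ℕ) × (Fin k → ℕ × ℕ → ℕ)) : Fin k → ℕ × ℕ → ℕ :=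
  fun s x =>
    if x ∈ Λ s then
      1 + ((Finset.range (p.2 s x)).filter fun v => TupleDescent Λ p.2 v).card +
        ∑ u ∈ Finset.range (p.2 s x), p.1 u
    else 0

/-- The Young diagram of the partition (2,2,2). -/
def lam222 : YoungDiagram :=
  ⟨Finset.range 3 ×ˢ Finset.range 2, by
    intro x y h hx
    simp only [Finset.coe_product, Finset.coe_range, Set.mem_prod, Set.mem_Iio] at hx ⊢
    exact ⟨lt_of_le_of_lt h.1 hx.1, lt_of_le_of_lt h.2 hx.2⟩⟩

/-! ### Auxiliary development for `phi_bijection` -/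

section PhiAux

variable {A K : Type*} [LinearOrder K]

/-- Rank of an element of a finset with respect to a key into a linear order. -/
noncomputable def rk (s : Finset A) (key : A → K) (a : A) : ℕ :=
  (s.filter fun b => key b < key a).card

lemma rk_lt_card {s : Finset A} {key : A → K} {a : A} (ha : a ∈ s) :
    rk s key a < s.card := by
  apply Finset.card_lt_card
  constructor
  · exact Finset.filter_subset _ _
  · intro h
    have := h ha
    simp at this

lemma rk_strictMono {s : Finset A} {key : A → K} {a b : A} (ha : a ∈ s)
    (hab : key a < key b) : rk s key a < rk s key b := by
  apply Finset.card_lt_card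
  constructor
  · intro c hc
    simp only [Finset.mem_filter] at hc ⊢
    exact ⟨hc.1, hc.2.trans hab⟩
  · intro h
    have : a ∈ s.filter fun c => key c < key a :=
      h (by simp [Finset.mem_filter, ha, hab])
    simp at this

lemma rk_injOn {s : Finset A} {key : A → K}
    (hkey : ∀ a ∈ s, ∀ b ∈ s, key a = key b → a = b)
    {a b : A} (ha : a ∈ s) (hb : b ∈ s) (hab : rk s key a = rk s key b) : a = b := by
  rcases lt_trichotomy (key a) (key b) with h | h | h
  · exact absurd hab (rk_strictMono ha h).ne
  · exact hkey a ha b hb h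
  · exact absurd hab.symm (rk_strictMono hb h).ne

lemma rk_surj {s : Finset A} {key : A → K}
    (hkey : ∀ a ∈ s, ∀ b ∈ s, key a = key b → a = b)
    {v : ℕ} (hv : v < s.card) : ∃ a ∈ s, rk s key a = v := by
  have := Finset.surj_on_of_inj_on_of_card_le (t := Finset.range s.card)
    (fun a (_ : a ∈ s) => rk s key a)
    (fun a ha => by simp [rk_lt_card ha])
    (fun a b ha hb h => rk_injOn hkey ha hb h)
    (by simp)
  obtain ⟨a, ha, h⟩ := this v (by simp [hv])
  exact ⟨a, ha, h.symm⟩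

lemma rk_lt_iff {s : Finset A} {key : A → K}
    (hkey : ∀ a ∈ s, ∀ b ∈ s, key a = key b → a = b)
    {a b : A} (ha : a ∈ s) (hb : b ∈ s) : rk s key a < rk s key b ↔ key a < key b := by
  constructor
  · intro h
    rcases lt_trichotomy (key a) (key b) with h' | h' | h'
    · exact h'
    · exact absurd (hkey a ha b hb h') (by rintro rfl; exact lt_irrefl _ h)
    · exact absurd (rk_strictMono hb h') (by omega)
  · exact rk_strictMono ha

variable {k : ℕ}

/-- The domain of a tuple of shapes, as a finset of (tableau index, cell) pairs. -/
noncomputable def Dm (Λ : Fin k → Finset (ℕ × ℕ)) : Finset (Fin k × ℕ × ℕ) :=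
  Finset.univ.biUnion fun s => (Λ s).image fun x => (s, x)

lemma mem_Dm {Λ : Fin k → Finset (ℕ × ℕ)} {p : Fin k × ℕ × ℕ} :
    p ∈ Dm Λ ↔ p.2 ∈ Λ p.1 := by
  constructor
  · intro h
    simp only [Dm, Finset.mem_biUnion, Finset.mem_univ, Finset.mem_image, true_and] at h
    obtain ⟨s, x, hx, rfl⟩ := h
    exact hx
  · intro h
    simp only [Dm, Finset.mem_biUnion, Finset.mem_univ, Finset.mem_image, true_and]
    exact ⟨p.1, p.2, h, rfl⟩

lemma card_Dm (Λ : Fin k → Finset (ℕ × ℕ)) : (Dm Λ).card = ∑ t, (Λ t).card := by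
  rw [Dm, Finset.card_biUnion]
  · refine Finset.sum_congr rfl fun s _ => ?_
    rw [Finset.card_image_of_injective]
    intro x y h
    exact (Prod.mk.injEq _ _ _ _).mp h |>.2
  · intro s _ t _ hst
    simp only [Finset.disjoint_left, Finset.mem_image]
    rintro p ⟨x, _, rfl⟩ ⟨y, _, h⟩
    exact hst ((Prod.mk.injEq _ _ _ _).mp h).1.symm

/-- The key used for standardization. -/
def kap (g : Fin k → ℕ × ℕ → ℕ) (p : Fin k × ℕ × ℕ) : ℕ ×ₗ (ℤ ×ₗ ℕ) :=
  toLex (g p.1 p.2, toLex (contentZ p.2, (p.1 : ℕ)))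

lemma kap_lt_iff {g : Fin k → ℕ × ℕ → ℕ} {p q : Fin k × ℕ × ℕ} :
    kap g p < kap g q ↔ g p.1 p.2 < g q.1 q.2 ∨ (g p.1 p.2 = g q.1 q.2 ∧
      (contentZ p.2 < contentZ q.2 ∨ (contentZ p.2 = contentZ q.2 ∧ (p.1 : ℕ) < (q.1 : ℕ)))) := by
  rw [kap, kap, Prod.Lex.lt_iff]
  constructor
  · rintro (h | ⟨h1, h2⟩)
    · exact Or.inl h
    · rw [Prod.Lex.lt_iff] at h2
      exact Or.inr ⟨h1, h2⟩
  · rintro (h | ⟨h1, h2⟩)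
    · exact Or.inl h
    · exact Or.inr ⟨h1, Prod.Lex.lt_iff.mpr h2⟩

lemma kap_eq_iff {g : Fin k → ℕ × ℕ → ℕ} {p q : Fin k × ℕ × ℕ} :
    kap g p = kap g q ↔ g p.1 p.2 = g q.1 q.2 ∧ contentZ p.2 = contentZ q.2 ∧
      (p.1 : ℕ) = (q.1 : ℕ) := by
  rw [kap, kap, toLex.injective.eq_iff, Prod.mk.injEq, toLex.injective.eq_iff, Prod.mk.injEq]

end PhiAux

section PhiAux2

variable {k : ℕ} {Λ : Fin k → Finset (ℕ × ℕ)} {f g : Fin k → ℕ × ℕ → ℕ} {α : ℕ → ℕ}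

lemma syt_pos (hf : IsSYTTuple Λ f) {s : Fin k} {x : ℕ × ℕ} (hx : x ∈ Λ s) : 1 ≤ f s x := by
  have := hf.2.1 s x hx
  simp only [Finset.mem_Icc] at this
  exact this.1

lemma syt_le (hf : IsSYTTuple Λ f) {s : Fin k} {x : ℕ × ℕ} (hx : x ∈ Λ s) :
    f s x ≤ ∑ t, (Λ t).card := by
  have := hf.2.1 s x hx
  simp only [Finset.mem_Icc] at this
  exact this.2

lemma syt_unique (hf : IsSYTTuple Λ f) {p q : Fin k × ℕ × ℕ}
    (hp : p.2 ∈ Λ p.1) (hq : q.2 ∈ Λ q.1) (h : f p.1 p.2 = f q.1 q.2) : p = q := by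
  have hv : f p.1 p.2 ∈ Finset.Icc 1 (∑ t, (Λ t).card) := hf.2.1 _ _ hp
  obtain ⟨r, -, hr⟩ := hf.2.2.1 (f p.1 p.2) hv
  have h1 := hr p ⟨hp, rfl⟩
  have h2 := hr q ⟨hq, h.symm⟩
  rw [h1, h2]

lemma syt_row_le (hf : IsSYTTuple Λ f) {s : Fin k} {i j1 j2 : ℕ} (h : j1 ≤ j2)
    (h1 : (i, j1) ∈ Λ s) (h2 : (i, j2) ∈ Λ s) : f s (i, j1) ≤ f s (i, j2) := by
  rcases eq_or_lt_of_le h with rfl | h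
  · exact le_rfl
  · exact (hf.2.2.2.1 s i j1 j2 h h1 h2).le

/-- Chain lemma: along a run with no descents, the pair (content, tableau index)
weakly increases lexicographically. -/
lemma chain (hf : IsSYTTuple Λ f) :
    ∀ w v (p q : Fin k × ℕ × ℕ), p.2 ∈ Λ p.1 → q.2 ∈ Λ q.1 →
      f p.1 p.2 = v → f q.1 q.2 = w → v ≤ w →
      (∀ u, v ≤ u → u < w → ¬ TupleDescent Λ f u) →
      contentZ p.2 < contentZ q.2 ∨ (contentZ p.2 = contentZ q.2 ∧ p.1 ≤ q.1) := by
  intro w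
  induction w with
  | zero =>
    intro v p q hp _ hfp _ hvw _
    have := syt_pos hf hp
    omega
  | succ w IH =>
    intro v p q hp hq hfp hfq hvw hnd
    by_cases hv : v = w + 1
    · have : p = q := syt_unique hf hp hq (by rw [hfp, hfq, hv])
      subst this
      exact Or.inr ⟨rfl, le_rfl⟩
    · have hvw' : v ≤ w := by omega
      have hv1 : 1 ≤ v := hfp ▸ syt_pos hf hp
      have hwl : w ∈ Finset.Icc 1 (∑ t, (Λ t).card) := by
        have h2 := syt_le hf hq
        simp only [Finset.mem_Icc]
        omega
      obtain ⟨r, ⟨hr1, hr2⟩, -⟩ := hf.2.2.1 w hwl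
      have hstep := hnd w hvw' (Nat.lt_succ_self w)
      rw [TupleDescent] at hstep
      push_neg at hstep
      have hstep2 := hstep r.1 q.1 r.2 q.2 hr1 hq hr2 hfq
      have hlex2 : contentZ r.2 < contentZ q.2 ∨ (contentZ r.2 = contentZ q.2 ∧ r.1 ≤ q.1) := by
        rcases le_or_gt r.1 q.1 with h1 | h1
        · rcases eq_or_lt_of_le (hstep2.1 h1) with h3 | h3
          · exact Or.inr ⟨h3, h1⟩
          · exact Or.inl h3
        · exact Or.inl (hstep2.2 h1)
      have hlex1 := IH v p r hp hr1 hfp hr2 hvw' (fun u h1 h2 => hnd u h1 (by omega))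
      rcases hlex1 with h1 | ⟨h1, h1'⟩ <;> rcases hlex2 with h2 | ⟨h2, h2'⟩
      · exact Or.inl (h1.trans h2)
      · exact Or.inl (h2 ▸ h1)
      · exact Or.inl (h1 ▸ h2)
      · exact Or.inr ⟨h1.trans h2, h1'.trans h2'⟩

/-- Number of descents below `v`. -/
noncomputable def Dv (Λ : Fin k → Finset (ℕ × ℕ)) (f : Fin k → ℕ × ℕ → ℕ) (v : ℕ) : ℕ :=
  ((Finset.range v).filter fun u => TupleDescent Λ f u).card

/-- The entry given to the cell of value `v`. -/
noncomputable def Fv (Λ : Fin k → Finset (ℕ × ℕ)) (α : ℕ → ℕ) (f : Fin k → ℕ × ℕ → ℕ)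
    (v : ℕ) : ℕ :=
  1 + Dv Λ f v + ∑ u ∈ Finset.range v, α u

lemma Dv_succ (v : ℕ) :
    Dv Λ f (v + 1) = Dv Λ f v + (if TupleDescent Λ f v then 1 else 0) := by
  rw [Dv, Dv, Finset.range_add_one, Finset.filter_insert]
  split
  · rw [Finset.card_insert_of_notMem (by simp)]
  · simp

lemma Fv_succ (v : ℕ) :
    Fv Λ α f (v + 1) = Fv Λ α f v + (if TupleDescent Λ f v then 1 else 0) + α v := by
  rw [Fv, Fv, Dv_succ, Finset.sum_range_succ]
  ring

lemma Fv_mono {v w : ℕ} (h : v ≤ w) : Fv Λ α f v ≤ Fv Λ α f w := by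
  induction w with
  | zero =>
    have : v = 0 := by omega
    rw [this]
  | succ w IH =>
    rcases Nat.lt_or_ge v (w + 1) with h' | h'
    · calc Fv Λ α f v ≤ Fv Λ α f w := IH (by omega)
        _ ≤ Fv Λ α f (w + 1) := by rw [Fv_succ]; omega
    · have : v = w + 1 := by omega
      rw [this]

lemma phi_apply {s : Fin k} {x : ℕ × ℕ} (hx : x ∈ Λ s) :
    phi Λ (α, f) s x = Fv Λ α f (f s x) := by
  simp [phi, hx, Fv, Dv]

lemma no_descent_zero (hf : IsSYTTuple Λ f) : ¬ TupleDescent Λ f 0 := by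
  rintro ⟨s, t, x, y, hx, -, hfx, -, -⟩
  have := syt_pos hf hx
  omega

lemma Fv_one (hα0 : α 0 = 0) (hf : IsSYTTuple Λ f) : Fv Λ α f 1 = 1 := by
  have : Dv Λ f 1 = 0 := by
    rw [Dv]
    simp only [Finset.range_one, Finset.card_eq_zero, Finset.filter_eq_empty_iff]
    intro u hu
    simp only [Finset.mem_singleton] at hu
    subst hu
    exact no_descent_zero hf
  rw [Fv, this]
  simp [hα0]

lemma Fv_lt_of_descent {u v w : ℕ} (hd : TupleDescent Λ f u) (hv : v ≤ u) (hw : u < w) :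
    Fv Λ α f v < Fv Λ α f w := by
  calc Fv Λ α f v ≤ Fv Λ α f u := Fv_mono hv
    _ < Fv Λ α f (u + 1) := by rw [Fv_succ]; simp [hd]; omega
    _ ≤ Fv Λ α f w := Fv_mono (by omega)

lemma col_descent (hf : IsSYTTuple Λ f) {s : Fin k} {i1 i2 j : ℕ} (hlt : i1 < i2)
    (h1 : (i1, j) ∈ Λ s) (h2 : (i2, j) ∈ Λ s) :
    ∃ u, f s (i1, j) ≤ u ∧ u < f s (i2, j) ∧ TupleDescent Λ f u := by
  by_contra hcon
  push_neg at hcon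
  have hchain := chain hf (f s (i2, j)) (f s (i1, j)) (s, (i1, j)) (s, (i2, j)) h1 h2 rfl rfl
    (hf.2.2.2.2 s i1 i2 j hlt h1 h2).le
    (fun u hu1 hu2 hd => hcon u hu1 hu2 hd)
  have hc12 : contentZ ((i2, j) : ℕ × ℕ) < contentZ ((i1, j) : ℕ × ℕ) := by
    show (j : ℤ) - (i2 : ℤ) < (j : ℤ) - (i1 : ℤ)
    omega
  rcases hchain with h | ⟨h, -⟩
  · exact absurd hc12 (not_lt.mpr h.le)
  · exact absurd hc12 (not_lt.mpr h.le)

lemma phi_ssyt (hΛ : ∀ s, IsLowerSet (↑(Λ s) : Set (ℕ × ℕ)))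
    (hf : IsSYTTuple Λ f) : IsSSYTTuple Λ (phi Λ (α, f)) := by
  refine ⟨fun s x hx => by simp [phi, hx], fun s x hx => ?_, ?_, ?_⟩
  · rw [phi_apply hx, Fv]; omega
  · intro s i j1 j2 hj h1 h2
    rw [phi_apply h1, phi_apply h2]
    exact Fv_mono (syt_row_le hf hj h1 h2)
  · intro s i1 i2 j hi h1 h2
    rw [phi_apply h1, phi_apply h2]
    obtain ⟨u, hu1, hu2, hd⟩ := col_descent hf hi h1 h2
    exact Fv_lt_of_descent hd hu1 hu2

end PhiAux2

section PhiAux3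

variable {k : ℕ} {Λ : Fin k → Finset (ℕ × ℕ)} {f g : Fin k → ℕ × ℕ → ℕ} {α : ℕ → ℕ}

/-- Two cells of the same tableau with the same content and the same entry coincide. -/
lemma ssyt_diag (hΛ : ∀ s, IsLowerSet (↑(Λ s) : Set (ℕ × ℕ)))
    (hg : IsSSYTTuple Λ g) {s : Fin k} {x y : ℕ × ℕ} (hx : x ∈ Λ s) (hy : y ∈ Λ s)
    (hc : contentZ x = contentZ y) (hv : g s x = g s y) : x = y := by
  obtain ⟨i, j⟩ := x
  obtain ⟨i', j'⟩ := y
  have hc' : (j : ℤ) - i = (j' : ℤ) - i' := hc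
  rcases lt_trichotomy i i' with h | h | h
  · have hj : j < j' := by omega
    have hm : ((i', j) : ℕ × ℕ) ∈ Λ s := hΛ s (Prod.mk_le_mk.mpr ⟨le_rfl, hj.le⟩) hy
    have h1 := hg.2.2.2 s i i' j h hx hm
    have h2 := hg.2.2.1 s i' j j' hj.le hm hy
    omega
  · have : j = j' := by omega
    rw [h, this]
  · have hj : j' < j := by omega
    have hm : ((i, j') : ℕ × ℕ) ∈ Λ s := hΛ s (Prod.mk_le_mk.mpr ⟨le_rfl, hj.le⟩) hx
    have h1 := hg.2.2.2 s i' i j' h hy hm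
    have h2 := hg.2.2.1 s i j' j hj.le hm hx
    omega

lemma kap_injOn (hΛ : ∀ s, IsLowerSet (↑(Λ s) : Set (ℕ × ℕ)))
    (hg : IsSSYTTuple Λ g) :
    ∀ p ∈ Dm Λ, ∀ q ∈ Dm Λ, kap g p = kap g q → p = q := by
  intro p hp q hq h
  rw [kap_eq_iff] at h
  have hs : p.1 = q.1 := Fin.ext h.2.2
  have hx : p.2 = q.2 :=
    ssyt_diag hΛ hg (mem_Dm.mp hp) (hs ▸ mem_Dm.mp hq) h.2.1 (by rw [h.1, hs])
  exact Prod.ext hs hx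

/-- The standardization of a semistandard tuple. -/
noncomputable def stand (Λ : Fin k → Finset (ℕ × ℕ)) (g : Fin k → ℕ × ℕ → ℕ) :
    Fin k → ℕ × ℕ → ℕ := fun s x =>
  if x ∈ Λ s then 1 + rk (Dm Λ) (kap g) (s, x) else 0

lemma stand_apply {s : Fin k} {x : ℕ × ℕ} (hx : x ∈ Λ s) :
    stand Λ g s x = 1 + rk (Dm Λ) (kap g) (s, x) := by
  simp [stand, hx]

lemma stand_lt_iff (hΛ : ∀ s, IsLowerSet (↑(Λ s) : Set (ℕ × ℕ)))
    (hg : IsSSYTTuple Λ g) {p q : Fin k × ℕ × ℕ}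
    (hp : p.2 ∈ Λ p.1) (hq : q.2 ∈ Λ q.1) :
    stand Λ g p.1 p.2 < stand Λ g q.1 q.2 ↔ kap g p < kap g q := by
  rw [show stand Λ g p.1 p.2 = 1 + rk (Dm Λ) (kap g) p by rw [stand_apply hp],
      show stand Λ g q.1 q.2 = 1 + rk (Dm Λ) (kap g) q by rw [stand_apply hq]]
  rw [Nat.add_lt_add_iff_left]
  exact rk_lt_iff (kap_injOn hΛ hg) (mem_Dm.mpr hp) (mem_Dm.mpr hq)

lemma stand_syt (hΛ : ∀ s, IsLowerSet (↑(Λ s) : Set (ℕ × ℕ)))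
    (hg : IsSSYTTuple Λ g) : IsSYTTuple Λ (stand Λ g) := by
  refine ⟨fun s x hx => by simp [stand, hx], ?_, ?_, ?_, ?_⟩
  · intro s x hx
    rw [stand_apply hx]
    have h1 : rk (Dm Λ) (kap g) (s, x) < (Dm Λ).card := rk_lt_card (mem_Dm.mpr hx)
    rw [card_Dm] at h1
    simp only [Finset.mem_Icc]
    omega
  · intro v hv
    simp only [Finset.mem_Icc] at hv
    have hv' : v - 1 < (Dm Λ).card := by rw [card_Dm]; omega
    obtain ⟨p, hp, hrk⟩ := rk_surj (kap_injOn hΛ hg) hv'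
    refine ⟨p, ⟨mem_Dm.mp hp, by rw [stand_apply (mem_Dm.mp hp), hrk]; omega⟩, ?_⟩
    rintro q ⟨hq, hqv⟩
    rw [stand_apply hq, Prod.mk.eta] at hqv
    exact rk_injOn (kap_injOn hΛ hg) (mem_Dm.mpr hq) hp (by omega)
  · intro s i j1 j2 hj h1 h2
    rw [stand_apply h1, stand_apply h2, Nat.add_lt_add_iff_left]
    apply rk_strictMono (mem_Dm.mpr h1)
    rw [kap_lt_iff]
    rcases eq_or_lt_of_le (hg.2.2.1 s i j1 j2 hj.le h1 h2) with h | h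
    · refine Or.inr ⟨h, Or.inl ?_⟩
      show (j1 : ℤ) - i < (j2 : ℤ) - i
      omega
    · exact Or.inl h
  · intro s i1 i2 j hi h1 h2
    rw [stand_apply h1, stand_apply h2, Nat.add_lt_add_iff_left]
    apply rk_strictMono (mem_Dm.mpr h1)
    rw [kap_lt_iff]
    exact Or.inl (hg.2.2.2 s i1 i2 j hi h1 h2)

/-- The common entry of the cells of a given standardization value. -/
noncomputable def gvalAt (Λ : Fin k → Finset (ℕ × ℕ)) (g : Fin k → ℕ × ℕ → ℕ) (v : ℕ) : ℕ :=
  ((Dm Λ).filter fun p => stand Λ g p.1 p.2 = v).sup fun p => g p.1 p.2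

lemma gval_eq (hΛ : ∀ s, IsLowerSet (↑(Λ s) : Set (ℕ × ℕ)))
    (hg : IsSSYTTuple Λ g) {p : Fin k × ℕ × ℕ} {v : ℕ}
    (hp : p.2 ∈ Λ p.1) (hpv : stand Λ g p.1 p.2 = v) :
    gvalAt Λ g v = g p.1 p.2 := by
  have hfil : ((Dm Λ).filter fun q => stand Λ g q.1 q.2 = v) = {p} := by
    ext q
    simp only [Finset.mem_filter, Finset.mem_singleton, mem_Dm]
    constructor
    · rintro ⟨hq, hqv⟩
      exact syt_unique (stand_syt hΛ hg) hq hp (by rw [hqv, hpv])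
    · rintro rfl
      exact ⟨hp, hpv⟩
  rw [gvalAt, hfil, Finset.sup_singleton]

/-- The composition recovering `α` from a semistandard tuple. -/
noncomputable def alphaOf (Λ : Fin k → Finset (ℕ × ℕ)) (g : Fin k → ℕ × ℕ → ℕ) (u : ℕ) : ℕ :=
  if 1 ≤ u ∧ u < ∑ t, (Λ t).card then
    gvalAt Λ g (u + 1) - gvalAt Λ g u -
      (if TupleDescent Λ (stand Λ g) u then 1 else 0)
  else 0

/-- Consecutive values in the standardization: the entry increases weakly,
and strictly across a descent. -/
lemma consecutive_ge (hΛ : ∀ s, IsLowerSet (↑(Λ s) : Set (ℕ × ℕ)))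
    (hg : IsSSYTTuple Λ g) {p q : Fin k × ℕ × ℕ} {u : ℕ}
    (hp : p.2 ∈ Λ p.1) (hq : q.2 ∈ Λ q.1)
    (hpu : stand Λ g p.1 p.2 = u) (hqu : stand Λ g q.1 q.2 = u + 1) :
    g p.1 p.2 + (if TupleDescent Λ (stand Λ g) u then 1 else 0) ≤ g q.1 q.2 := by
  have hkap : kap g p < kap g q := by
    rw [← stand_lt_iff hΛ hg hp hq]
    omega
  rw [kap_lt_iff] at hkap
  split
  · rename_i hd
    obtain ⟨s, t, x, y, hx, hy, hfx, hfy, hdisj⟩ := hd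
    have hps : (s, x) = p :=
      syt_unique (stand_syt hΛ hg) hx hp (by rw [hfx, hpu])
    have hqt : (t, y) = q :=
      syt_unique (stand_syt hΛ hg) hy hq (by rw [hfy, hqu])
    have hs : s = p.1 := congrArg Prod.fst hps
    have hxp : x = p.2 := congrArg Prod.snd hps
    have ht : t = q.1 := congrArg Prod.fst hqt
    have hyq : y = q.2 := congrArg Prod.snd hqt
    subst hs hxp ht hyq
    rcases hkap with h | ⟨he, hlex⟩
    · omega
    · exfalso
      rcases hdisj with ⟨hst, hcc⟩ | ⟨hst, hcc⟩
      · rcases hlex with h | ⟨h, h'⟩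
        · omega
        · omega
      · rcases hlex with h | ⟨h, h'⟩
        · omega
        · have hvv : (q.1 : ℕ) < (p.1 : ℕ) := hst
          omega
  · rcases hkap with h | ⟨he, -⟩
    · omega
    · omega

lemma stand_one_entry (hΛ : ∀ s, IsLowerSet (↑(Λ s) : Set (ℕ × ℕ)))
    (hg : IsSSYTTuple Λ g) (hone : ∃ s x, x ∈ Λ s ∧ g s x = 1)
    {p : Fin k × ℕ × ℕ} (hp : p.2 ∈ Λ p.1) (hp1 : stand Λ g p.1 p.2 = 1) :
    g p.1 p.2 = 1 := by
  obtain ⟨s0, x0, hx0, hg0⟩ := hone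
  have hrk : rk (Dm Λ) (kap g) p = 0 := by
    rw [stand_apply hp, Prod.mk.eta] at hp1
    omega
  have hone' : 1 ≤ g p.1 p.2 := hg.2.1 _ _ hp
  by_contra hne
  have hgt : 1 < g p.1 p.2 := by omega
  have hkap : kap g (s0, x0) < kap g p := by
    rw [kap_lt_iff]
    exact Or.inl (by rw [hg0]; exact hgt)
  have : (s0, x0) ∈ (Dm Λ).filter fun q => kap g q < kap g p := by
    rw [Finset.mem_filter]
    exact ⟨mem_Dm.mpr hx0, hkap⟩
  rw [rk] at hrk
  rw [Finset.card_eq_zero] at hrk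
  simp [hrk] at this

/-- Telescoping: the entries of `g` are recovered by `Fv` from the
standardization and `alphaOf`. -/
lemma telescope (hΛ : ∀ s, IsLowerSet (↑(Λ s) : Set (ℕ × ℕ)))
    (hg : IsSSYTTuple Λ g) (hone : ∃ s x, x ∈ Λ s ∧ g s x = 1) :
    ∀ v, 1 ≤ v → v ≤ ∑ t, (Λ t).card →
      gvalAt Λ g v = Fv Λ (alphaOf Λ g) (stand Λ g) v := by
  intro v
  induction v with
  | zero => omega
  | succ v IH =>
    intro h1 h2
    rcases Nat.eq_or_lt_of_le h1 with h | h
    · -- v + 1 = 1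
      have hv0 : v = 0 := by omega
      subst hv0
      obtain ⟨p, ⟨hp, hp1⟩, -⟩ := (stand_syt hΛ hg).2.2.1 1 (by simp only [Finset.mem_Icc]; omega)
      rw [gval_eq hΛ hg hp hp1, stand_one_entry hΛ hg hone hp hp1,
        Fv_one (by simp [alphaOf]) (stand_syt hΛ hg)]
    · have hv1 : 1 ≤ v := by omega
      have hv2 : v ≤ ∑ t, (Λ t).card := by omega
      obtain ⟨p, ⟨hp, hpv⟩, -⟩ := (stand_syt hΛ hg).2.2.1 v (by simp only [Finset.mem_Icc]; omega)
      obtain ⟨q, ⟨hq, hqv⟩, -⟩ := (stand_syt hΛ hg).2.2.1 (v + 1)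
        (by simp only [Finset.mem_Icc]; omega)
      have hcons := consecutive_ge hΛ hg hp hq hpv hqv
      have halpha : alphaOf Λ g v =
          gvalAt Λ g (v + 1) - gvalAt Λ g v -
            (if TupleDescent Λ (stand Λ g) v then 1 else 0) := by
        rw [alphaOf, if_pos ⟨hv1, by omega⟩]
      have e1 : gvalAt Λ g v = g p.1 p.2 := gval_eq hΛ hg hp hpv
      have e2 : gvalAt Λ g (v + 1) = g q.1 q.2 := gval_eq hΛ hg hq hqv
      rw [e2, Fv_succ, ← IH hv1 hv2, e1]
      rw [e1, e2] at halpha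
      by_cases hd : TupleDescent Λ (stand Λ g) v <;>
        simp only [hd, if_true, if_false] at hcons halpha ⊢ <;> omega

/-- `φ` is a left inverse of the standardization-plus-`alphaOf` map. -/
lemma phi_stand (hΛ : ∀ s, IsLowerSet (↑(Λ s) : Set (ℕ × ℕ)))
    (hg : IsSSYTTuple Λ g) (hone : ∃ s x, x ∈ Λ s ∧ g s x = 1) :
    phi Λ (alphaOf Λ g, stand Λ g) = g := by
  funext s x
  by_cases hx : x ∈ Λ s
  · rw [phi_apply hx]
    have h1 : 1 ≤ stand Λ g s x := syt_pos (stand_syt hΛ hg) hx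
    have h2 : stand Λ g s x ≤ ∑ t, (Λ t).card := syt_le (stand_syt hΛ hg) hx
    rw [← telescope hΛ hg hone _ h1 h2]
    exact gval_eq hΛ hg (p := (s, x)) hx rfl
  · simp [phi, hx, hg.1 s x hx]

end PhiAux3

section PhiAux4

variable {k : ℕ} {Λ : Fin k → Finset (ℕ × ℕ)} {f g : Fin k → ℕ × ℕ → ℕ} {α : ℕ → ℕ}

lemma card_filter_lt (hf : IsSYTTuple Λ f) {s : Fin k} {x : ℕ × ℕ} (hx : x ∈ Λ s) :
    ((Dm Λ).filter fun q => f q.1 q.2 < f s x).card = f s x - 1 := by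
  have hle := syt_le hf hx
  have hpos := syt_pos hf hx
  rw [show f s x - 1 = (Finset.Icc 1 (f s x - 1)).card by rw [Nat.card_Icc]; omega]
  apply Finset.card_bij (fun q _ => f q.1 q.2)
  · intro q hq
    rw [Finset.mem_filter, mem_Dm] at hq
    have := syt_pos hf hq.1
    simp only [Finset.mem_Icc]
    omega
  · intro q1 hq1 q2 hq2 h
    rw [Finset.mem_filter] at hq1 hq2
    exact syt_unique hf (mem_Dm.mp hq1.1) (mem_Dm.mp hq2.1) h
  · intro u hu
    simp only [Finset.mem_Icc] at hu
    obtain ⟨r, ⟨hr, hru⟩, -⟩ := hf.2.2.1 u (by simp only [Finset.mem_Icc]; omega)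
    exact ⟨r, Finset.mem_filter.mpr ⟨mem_Dm.mpr hr, by omega⟩, hru⟩

lemma f_lt_kap (hΛ : ∀ s, IsLowerSet (↑(Λ s) : Set (ℕ × ℕ)))
    (hf : IsSYTTuple Λ f) {p q : Fin k × ℕ × ℕ}
    (hp : p.2 ∈ Λ p.1) (hq : q.2 ∈ Λ q.1) (hlt : f p.1 p.2 < f q.1 q.2) :
    kap (phi Λ (α, f)) p < kap (phi Λ (α, f)) q := by
  have hgp : phi Λ (α, f) p.1 p.2 = Fv Λ α f (f p.1 p.2) := phi_apply hp
  have hgq : phi Λ (α, f) q.1 q.2 = Fv Λ α f (f q.1 q.2) := phi_apply hq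
  rw [kap_lt_iff, hgp, hgq]
  rcases eq_or_lt_of_le (Fv_mono (Λ := Λ) (α := α) (f := f) hlt.le) with hFe | hF
  swap
  · exact Or.inl hF
  refine Or.inr ⟨hFe, ?_⟩
  have hnd : ∀ u, f p.1 p.2 ≤ u → u < f q.1 q.2 → ¬ TupleDescent Λ f u := by
    intro u h1 h2 hd
    exact absurd hFe (Fv_lt_of_descent (α := α) hd h1 h2).ne
  have hchain := chain hf (f q.1 q.2) (f p.1 p.2) p q hp hq rfl rfl hlt.le hnd
  rcases hchain with h | ⟨hc, hs⟩
  · exact Or.inl h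
  rcases lt_or_eq_of_le hs with hs' | hs'
  · exact Or.inr ⟨hc, hs'⟩
  exfalso
  have hs1 : p.1 = q.1 := hs'
  have hceq : (p.2.2 : ℤ) - p.2.1 = (q.2.2 : ℤ) - q.2.1 := hc
  have hp' : (p.2.1, p.2.2) ∈ Λ p.1 := hp
  have hq' : (q.2.1, q.2.2) ∈ Λ p.1 := by rw [hs1]; exact hq
  rcases lt_trichotomy p.2.1 q.2.1 with hi | hi | hi
  · have hj : p.2.2 < q.2.2 := by omega
    have hm : (q.2.1, p.2.2) ∈ Λ p.1 := hΛ p.1 (Prod.mk_le_mk.mpr ⟨le_rfl, hj.le⟩) hq'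
    obtain ⟨u, hu1, hu2, hd⟩ := col_descent hf hi hp' hm
    have hrow : f p.1 (q.2.1, p.2.2) < f p.1 (q.2.1, q.2.2) :=
      hf.2.2.2.1 p.1 q.2.1 p.2.2 q.2.2 hj hm hq'
    have hqe : f q.1 q.2 = f p.1 (q.2.1, q.2.2) := by rw [hs1]
    exact hnd u hu1 (by omega) hd
  · have hj : p.2.2 = q.2.2 := by omega
    have hpq : p = q := Prod.ext hs1 (Prod.ext hi hj)
    rw [hpq] at hlt
    exact lt_irrefl _ hlt
  · have hj : q.2.2 < p.2.2 := by omega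
    have hm : (p.2.1, q.2.2) ∈ Λ p.1 := hΛ p.1 (Prod.mk_le_mk.mpr ⟨le_rfl, hj.le⟩) hp'
    have h1 : f p.1 (q.2.1, q.2.2) < f p.1 (p.2.1, q.2.2) :=
      hf.2.2.2.2 p.1 q.2.1 p.2.1 q.2.2 hi hq' hm
    have h2 : f p.1 (p.2.1, q.2.2) < f p.1 (p.2.1, p.2.2) :=
      hf.2.2.2.1 p.1 p.2.1 q.2.2 p.2.2 hj hm hp'
    have hqe : f q.1 q.2 = f p.1 (q.2.1, q.2.2) := by rw [hs1]
    have hpe : f p.1 p.2 = f p.1 (p.2.1, p.2.2) := rfl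
    omega

lemma stand_phi (hΛ : ∀ s, IsLowerSet (↑(Λ s) : Set (ℕ × ℕ)))
    (hf : IsSYTTuple Λ f) : stand Λ (phi Λ (α, f)) = f := by
  funext s x
  by_cases hx : x ∈ Λ s
  · rw [stand_apply hx]
    have hcard : ((Dm Λ).filter fun q => kap (phi Λ (α, f)) q < kap (phi Λ (α, f)) (s, x))
        = (Dm Λ).filter fun q => f q.1 q.2 < f s x := by
      apply Finset.filter_congr
      intro q hq
      rw [mem_Dm] at hq
      constructor
      · intro h
        rcases lt_trichotomy (f q.1 q.2) (f s x) with h' | h' | h'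
        · exact h'
        · exfalso
          have : q = (s, x) := syt_unique hf hq hx h'
          rw [this] at h
          exact lt_irrefl _ h
        · exact absurd h (asymm (f_lt_kap (α := α) hΛ hf (p := (s, x)) (q := q) hx hq h'))
      · intro h
        exact f_lt_kap (α := α) hΛ hf (p := q) (q := (s, x)) hq hx h
    rw [rk, hcard, card_filter_lt hf hx]
    have := syt_pos hf hx
    omega
  · simp [stand, hx, hf.1 s x hx]

lemma gval_phi (hΛ : ∀ s, IsLowerSet (↑(Λ s) : Set (ℕ × ℕ)))
    (hf : IsSYTTuple Λ f) {v : ℕ} (hv1 : 1 ≤ v) (hv2 : v ≤ ∑ t, (Λ t).card) :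
    gvalAt Λ (phi Λ (α, f)) v = Fv Λ α f v := by
  obtain ⟨p, ⟨hp, hpv⟩, -⟩ := hf.2.2.1 v (by simp only [Finset.mem_Icc]; omega)
  have hsv : stand Λ (phi Λ (α, f)) p.1 p.2 = v := by rw [stand_phi hΛ hf, hpv]
  rw [gval_eq hΛ (phi_ssyt hΛ hf) hp hsv,
    show phi Λ (α, f) p.1 p.2 = Fv Λ α f (f p.1 p.2) from phi_apply hp, hpv]

lemma alpha_phi (hΛ : ∀ s, IsLowerSet (↑(Λ s) : Set (ℕ × ℕ)))
    (hf : IsSYTTuple Λ f) (hα0 : α 0 = 0)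
    (hαz : ∀ u, (∑ t, (Λ t).card) ≤ u → α u = 0) :
    alphaOf Λ (phi Λ (α, f)) = α := by
  funext u
  by_cases hu : 1 ≤ u ∧ u < ∑ t, (Λ t).card
  · simp only [alphaOf]
    rw [if_pos hu, stand_phi hΛ hf, gval_phi hΛ hf (by omega) (by omega),
      gval_phi hΛ hf hu.1 (by omega), Fv_succ]
    split_ifs with hd <;> omega
  · simp only [alphaOf]
    rw [if_neg hu]
    push_neg at hu
    rcases Nat.lt_or_ge u 1 with h | h
    · have hu0 : u = 0 := by omega
      rw [hu0, hα0]
    · exact (hαz u (hu h)).symm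

end PhiAux4

section PhiAux5

variable {k : ℕ} {Λ : Fin k → Finset (ℕ × ℕ)} {f : Fin k → ℕ × ℕ → ℕ} {α : ℕ → ℕ}

lemma max_entry_phi (hf : IsSYTTuple Λ f) (hpos : 0 < ∑ t, (Λ t).card) :
    maxEntry Λ (phi Λ (α, f)) = Fv Λ α f (∑ t, (Λ t).card) := by
  apply le_antisymm
  · apply Finset.sup_le
    intro s _
    apply Finset.sup_le
    intro x hx
    rw [phi_apply hx]
    exact Fv_mono (syt_le hf hx)
  · obtain ⟨p, ⟨hp, hpv⟩, -⟩ := hf.2.2.1 (∑ t, (Λ t).card)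
      (by simp only [Finset.mem_Icc]; omega)
    calc Fv Λ α f (∑ t, (Λ t).card) = phi Λ (α, f) p.1 p.2 := by rw [phi_apply hp, hpv]
      _ ≤ (Λ p.1).sup fun x => phi Λ (α, f) p.1 x := Finset.le_sup hp
      _ ≤ maxEntry Λ (phi Λ (α, f)) :=
        Finset.le_sup (f := fun s => (Λ s).sup fun x => phi Λ (α, f) s x)
          (Finset.mem_univ p.1)

lemma syt_one_corner (hΛ : ∀ s, IsLowerSet (↑(Λ s) : Set (ℕ × ℕ)))
    (hf : IsSYTTuple Λ f) {p : Fin k × ℕ × ℕ} (hp : p.2 ∈ Λ p.1)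
    (h1 : f p.1 p.2 = 1) : p.2 = (0, 0) := by
  have hp' : (p.2.1, p.2.2) ∈ Λ p.1 := hp
  have hi : p.2.1 = 0 := by
    by_contra hi
    have hm : (p.2.1 - 1, p.2.2) ∈ Λ p.1 :=
      hΛ p.1 (Prod.mk_le_mk.mpr ⟨by omega, le_rfl⟩) hp'
    have := hf.2.2.2.2 p.1 (p.2.1 - 1) p.2.1 p.2.2 (by omega) hm hp'
    have := syt_pos hf hm
    have hpe : f p.1 p.2 = f p.1 (p.2.1, p.2.2) := rfl
    omega
  have hj : p.2.2 = 0 := by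
    by_contra hj
    have hm : (p.2.1, p.2.2 - 1) ∈ Λ p.1 :=
      hΛ p.1 (Prod.mk_le_mk.mpr ⟨le_rfl, by omega⟩) hp'
    have := hf.2.2.2.1 p.1 p.2.1 (p.2.2 - 1) p.2.2 (by omega) hm hp'
    have := syt_pos hf hm
    have hpe : f p.1 p.2 = f p.1 (p.2.1, p.2.2) := rfl
    omega
  exact Prod.ext hi hj

lemma corner_le (hΛ : ∀ s, IsLowerSet (↑(Λ s) : Set (ℕ × ℕ)))
    (hf : IsSYTTuple Λ f) {s : Fin k} {x : ℕ × ℕ} (hx : x ∈ Λ s) :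
    ((0, 0) : ℕ × ℕ) ∈ Λ s ∧ f s (0, 0) ≤ f s x := by
  have hx' : (x.1, x.2) ∈ Λ s := hx
  have hrow : ((0, x.2) : ℕ × ℕ) ∈ Λ s :=
    hΛ s (Prod.mk_le_mk.mpr ⟨Nat.zero_le _, le_rfl⟩) hx'
  have h00 : ((0, 0) : ℕ × ℕ) ∈ Λ s :=
    hΛ s (Prod.mk_le_mk.mpr ⟨le_rfl, Nat.zero_le _⟩) hrow
  refine ⟨h00, ?_⟩
  have h1 : f s (0, 0) ≤ f s (0, x.2) := syt_row_le hf (Nat.zero_le _) h00 hrow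
  have h2 : f s (0, x.2) ≤ f s (x.1, x.2) := by
    rcases Nat.eq_zero_or_pos x.1 with h | h
    · rw [← h]
    · exact (hf.2.2.2.2 s 0 x.1 x.2 h hrow hx').le
  have hxe : f s x = f s (x.1, x.2) := rfl
  omega

lemma idxOne_phi (hΛ : ∀ s, IsLowerSet (↑(Λ s) : Set (ℕ × ℕ)))
    (hf : IsSYTTuple Λ f) (hα0 : α 0 = 0) (hpos : 0 < ∑ t, (Λ t).card) :
    idxOne Λ (phi Λ (α, f)) = idxOne Λ f := by
  obtain ⟨p1, ⟨hp1, hp1v⟩, huniq⟩ := hf.2.2.1 1 (by simp only [Finset.mem_Icc]; omega)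
  have hcorner := syt_one_corner hΛ hf hp1 hp1v
  have hSf : {s : ℕ | ∃ hs : s < k, ∃ x ∈ Λ ⟨s, hs⟩, f ⟨s, hs⟩ x = 1} = {(p1.1 : ℕ)} := by
    ext s
    simp only [Set.mem_setOf_eq, Set.mem_singleton_iff]
    constructor
    · rintro ⟨hs, x, hx, hfx⟩
      have h := huniq ⟨⟨s, hs⟩, x⟩ ⟨hx, hfx⟩
      exact congrArg (fun r => (r.1 : ℕ)) h
    · rintro rfl
      exact ⟨p1.1.isLt, p1.2, hp1, hp1v⟩
  have hg1 : phi Λ (α, f) p1.1 p1.2 = 1 := by rw [phi_apply hp1, hp1v, Fv_one hα0 hf]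
  have hmem : (p1.1 : ℕ) ∈
      {s : ℕ | ∃ hs : s < k, ∃ x ∈ Λ ⟨s, hs⟩, phi Λ (α, f) ⟨s, hs⟩ x = 1} :=
    ⟨p1.1.isLt, p1.2, hp1, hg1⟩
  have hmem_g : ∀ s : ℕ,
      s ∈ {s : ℕ | ∃ hs : s < k, ∃ x ∈ Λ ⟨s, hs⟩, phi Λ (α, f) ⟨s, hs⟩ x = 1} →
      (p1.1 : ℕ) ≤ s := by
    rintro s ⟨hs, x, hx, hgx⟩
    obtain ⟨h00, hle⟩ := corner_le hΛ hf hx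
    have hv1 : 1 ≤ f ⟨s, hs⟩ (0, 0) := syt_pos hf h00
    have hFv : Fv Λ α f (f ⟨s, hs⟩ (0, 0)) = 1 := by
      have he : phi Λ (α, f) ⟨s, hs⟩ x = Fv Λ α f (f ⟨s, hs⟩ x) := phi_apply hx
      have hmono : Fv Λ α f (f ⟨s, hs⟩ (0, 0)) ≤ Fv Λ α f (f ⟨s, hs⟩ x) := Fv_mono hle
      have hge : 1 ≤ Fv Λ α f (f ⟨s, hs⟩ (0, 0)) := by rw [Fv]; omega
      omega
    have hnd : ∀ u, 1 ≤ u → u < f ⟨s, hs⟩ (0, 0) → ¬ TupleDescent Λ f u := by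
      intro u hu1 hu2 hd
      have hlt := Fv_lt_of_descent (α := α) hd hu1 hu2
      rw [Fv_one hα0 hf, hFv] at hlt
      exact lt_irrefl _ hlt
    have hchain := chain hf (f ⟨s, hs⟩ (0, 0)) 1 p1 (⟨⟨s, hs⟩, (0, 0)⟩ : Fin k × ℕ × ℕ)
      hp1 h00 hp1v rfl hv1 hnd
    rcases hchain with h | ⟨-, h⟩
    · rw [hcorner] at h
      exact absurd h (lt_irrefl _)
    · exact h
  have hsInf : sInf {s : ℕ | ∃ hs : s < k, ∃ x ∈ Λ ⟨s, hs⟩, phi Λ (α, f) ⟨s, hs⟩ x = 1} =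
      (p1.1 : ℕ) :=
    le_antisymm (Nat.sInf_le hmem) (hmem_g _ (Nat.sInf_mem ⟨_, hmem⟩))
  rw [idxOne, idxOne, hSf, hsInf, csInf_singleton]

end PhiAux5



/-- `φ` is a bijection from (weak compositions with `ℓ-1` parts) ×
(standard Young tableau tuples of shapes `Λ`) onto the semistandard Young
tableau tuples of shapes `Λ` containing at least one entry `1`; moreover
`max(φ(α,𝒯)) = |α| + |DES(𝒯)| + 1` and `idx₁` is preserved. -/
theorem phi_bijection (k : ℕ) (hk : 0 < k) (Λ : Fin k → Finset (ℕ × ℕ))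
    (hΛ : ∀ s, IsLowerSet (↑(Λ s) : Set (ℕ × ℕ)))
    (ℓ : ℕ) (hℓ : ℓ = ∑ t, (Λ t).card) (hpos : 0 < ℓ) :
    Set.BijOn (phi Λ)
      (({α : ℕ → ℕ | α 0 = 0 ∧ ∀ u, ℓ ≤ u → α u = 0}) ×ˢ
        ({f | IsSYTTuple Λ f}))
      {g | IsSSYTTuple Λ g ∧ ∃ s x, x ∈ Λ s ∧ g s x = 1} ∧
    ∀ (α : ℕ → ℕ) (f : Fin k → ℕ × ℕ → ℕ),
      (α 0 = 0 ∧ ∀ u, ℓ ≤ u → α u = 0) → IsSYTTuple Λ f →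
      maxEntry Λ (phi Λ (α, f)) =
          (∑ u ∈ Finset.range ℓ, α u) + (tupleDES Λ f).card + 1 ∧
        idxOne Λ (phi Λ (α, f)) = idxOne Λ f := by
  subst hℓ
  constructor
  · apply Set.InvOn.bijOn (f' := fun g => (alphaOf Λ g, stand Λ g))
    · constructor
      · rintro ⟨α, f⟩ ⟨hα, hf⟩
        simp only [Set.mem_setOf_eq] at hα hf
        simp only [Prod.mk.injEq]
        exact ⟨alpha_phi hΛ hf hα.1 hα.2, stand_phi hΛ hf⟩
      · rintro g ⟨hg, hone⟩
        exact phi_stand hΛ hg hone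
    · rintro ⟨α, f⟩ ⟨hα, hf⟩
      simp only [Set.mem_setOf_eq] at hα hf ⊢
      refine ⟨phi_ssyt hΛ hf, ?_⟩
      obtain ⟨p, ⟨hp, hpv⟩, -⟩ := hf.2.2.1 1 (by simp only [Finset.mem_Icc]; omega)
      exact ⟨p.1, p.2, hp, by rw [phi_apply hp, hpv, Fv_one hα.1 hf]⟩
    · rintro g ⟨hg, hone⟩
      refine ⟨⟨by simp [alphaOf], fun u hu => ?_⟩, stand_syt hΛ hg⟩
      simp only [alphaOf]
      rw [if_neg (by omega)]
  · intro α f hα hf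
    refine ⟨?_, idxOne_phi hΛ hf hα.1 hpos⟩
    rw [max_entry_phi hf hpos]
    simp only [Fv, Dv, tupleDES]
    omega

end BorderStrips
end

section
/- Let B ∈ BST(λ,k) be a border strip tableau and 𝒯 = (T^0,…,T^{k-1}) the standard Young tableau tuple corresponding to B under the Littlewood quotient map. If i lies in T^s, let c_𝒯(i) be its content in T^s, and let c_B(i) be the content of the tail of the strip labelled i in B. Then c_B(i) - 1 = k·(c_𝒯(i) - 1) + s. Consequently DES(B) = DES(𝒯), and if s is the index of the tableau of 𝒯 containing 1 and B¹ is the strip of B containing 1, then height(B¹) = k - 1 - s. -/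
open Finset Polynomial PowerSeries
open scoped Classical

namespace BorderStrips

variable {k : ℕ}

/-- beta set with arbitrary padding N -/
def myBeta (N : ℕ) (lam : YoungDiagram) : Finset ℕ :=
  (Finset.range N).image fun i => lam.rowLen i + (N - 1 - i)

lemma betaSet_eq_myBeta (k : ℕ) (lam : YoungDiagram) :
    betaSet k lam = myBeta (numRowsPad k lam) lam := rfl

lemma rowLen_eq_zero_of_colLen_le (lam : YoungDiagram) {i : ℕ} (h : lam.colLen 0 ≤ i) :
    lam.rowLen i = 0 := by
  by_contra hne
  have : (i, 0) ∈ lam := by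
    rw [lam.mem_iff_lt_rowLen]; omega
  rw [YoungDiagram.mem_iff_lt_colLen] at this; omega

lemma myBeta_strictAnti (lam : YoungDiagram) (N : ℕ) {i j : ℕ} (hij : i < j) (hj : j < N) :
    lam.rowLen j + (N - 1 - j) < lam.rowLen i + (N - 1 - i) := by
  have := lam.rowLen_anti i j (le_of_lt hij)
  omega

lemma mem_myBeta {N : ℕ} {lam : YoungDiagram} {x : ℕ} :
    x ∈ myBeta N lam ↔ ∃ i < N, x = lam.rowLen i + (N - 1 - i) := by
  simp [myBeta, eq_comm]

lemma myBeta_inj {N : ℕ} {lam : YoungDiagram} {i j : ℕ} (hi : i < N) (hj : j < N)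
    (h : lam.rowLen i + (N - 1 - i) = lam.rowLen j + (N - 1 - j)) : i = j := by
  rcases lt_trichotomy i j with h'|h'|h'
  · have := myBeta_strictAnti lam N h' hj; omega
  · exact h'
  · have := myBeta_strictAnti lam N h' hi; omega

lemma rowLen_bot (i : ℕ) : (⊥ : YoungDiagram).rowLen i = 0 := by
  rw [YoungDiagram.rowLen_eq_card]; simp [YoungDiagram.row]

lemma myBeta_bot (N : ℕ) : myBeta N ⊥ = Finset.range N := by
  ext x
  simp only [mem_myBeta, Finset.mem_range]
  constructor
  · rintro ⟨i, hi, rfl⟩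
    rw [show ((⊥ : YoungDiagram).rowLen i) = 0 from ?_]
    · omega
    · simp [YoungDiagram.rowLen]
  · intro hx
    exact ⟨N - 1 - x, by omega, by
      rw [show ((⊥ : YoungDiagram).rowLen (N-1-x)) = 0 from by simp [YoungDiagram.rowLen]]
      omega⟩

lemma mem_cellsOfBetaSet {S : Finset ℕ} {x : ℕ × ℕ} :
    x ∈ cellsOfBetaSet S ↔ ∃ b ∈ S,
      x.1 = (S.filter fun b' => b < b').card ∧ x.2 < b - (S.filter fun b' => b' < b).card := by
  simp only [cellsOfBetaSet, Finset.mem_biUnion, Finset.mem_image, Finset.mem_range]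
  constructor
  · rintro ⟨b, hb, j, hj, rfl⟩; exact ⟨b, hb, rfl, hj⟩
  · rintro ⟨b, hb, h1, h2⟩; exact ⟨b, hb, x.2, h2, by rw [← h1]⟩

/-- shifting a beta set up by one and adding 0 does not change the cells -/
lemma cellsOfBetaSet_shift (T : Finset ℕ) :
    cellsOfBetaSet (insert 0 (T.image (· + 1))) = cellsOfBetaSet T := by
  set T' := insert 0 (T.image (· + 1)) with hT'
  have hmem : ∀ y, y ∈ T' ↔ y = 0 ∨ ∃ t ∈ T, y = t + 1 := by
    intro y; simp [hT', eq_comm]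
  ext x
  simp only [mem_cellsOfBetaSet]
  constructor
  · rintro ⟨b, hb, h1, h2⟩
    rcases (hmem b).1 hb with rfl | ⟨t, ht, rfl⟩
    · omega
    · refine ⟨t, ht, ?_, ?_⟩
      · rw [h1]
        apply Finset.card_nbij' (fun y => y - 1) (fun y => y + 1)
        · intro y hy
          simp only [Finset.mem_coe, Finset.mem_filter] at hy ⊢
          rcases (hmem y).1 hy.1 with rfl | ⟨u, hu, rfl⟩
          · omega
          · simpa [hu] using by omega
        · intro y hy
          simp only [Finset.mem_coe, Finset.mem_filter] at hy ⊢
          refine ⟨(hmem _).2 (Or.inr ⟨y, hy.1, rfl⟩), by omega⟩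
        · intro y hy
          simp only [Finset.mem_coe, Finset.mem_filter] at hy
          rcases (hmem y).1 hy.1 with rfl | ⟨u, hu, rfl⟩
          · omega
          · beta_reduce; omega
        · intro y hy; beta_reduce; omega
      · have hcard : (T'.filter fun b' => b' < t + 1).card
            = (T.filter fun b' => b' < t).card + 1 := by
          have : (T'.filter fun b' => b' < t + 1)
              = insert 0 ((T.filter fun b' => b' < t).image (· + 1)) := by
            ext y
            simp only [Finset.mem_filter, Finset.mem_insert, Finset.mem_image]
            constructor
            · rintro ⟨hy, hlt⟩
              rcases (hmem y).1 hy with rfl | ⟨u, hu, rfl⟩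
              · left; rfl
              · right; exact ⟨u, ⟨hu, by omega⟩, rfl⟩
            · rintro (rfl | ⟨u, ⟨hu, hlt⟩, rfl⟩)
              · exact ⟨(hmem 0).2 (Or.inl rfl), by omega⟩
              · exact ⟨(hmem _).2 (Or.inr ⟨u, hu, rfl⟩), by omega⟩
          rw [this, Finset.card_insert_of_notMem (by simp), Finset.card_image_of_injective _
            (add_left_injective 1)]
        omega
  · rintro ⟨b, hb, h1, h2⟩
    refine ⟨b + 1, (hmem _).2 (Or.inr ⟨b, hb, rfl⟩), ?_, ?_⟩
    · rw [h1]
      apply Finset.card_nbij' (fun y => y + 1) (fun y => y - 1)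
      · intro y hy
        simp only [Finset.mem_coe, Finset.mem_filter] at hy ⊢
        exact ⟨(hmem _).2 (Or.inr ⟨y, hy.1, rfl⟩), by omega⟩
      · intro y hy
        simp only [Finset.mem_coe, Finset.mem_filter] at hy ⊢
        rcases (hmem y).1 hy.1 with rfl | ⟨u, hu, rfl⟩
        · omega
        · simpa [hu] using by omega
      · intro y hy; beta_reduce; omega
      · intro y hy
        simp only [Finset.mem_coe, Finset.mem_filter] at hy
        rcases (hmem y).1 hy.1 with rfl | ⟨u, hu, rfl⟩
        · omega
        · beta_reduce; omega
    · have hcard : (T'.filter fun b' => b' < b + 1)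
          = insert 0 ((T.filter fun b' => b' < b).image (· + 1)) := by
        ext y
        simp only [Finset.mem_filter, Finset.mem_insert, Finset.mem_image]
        constructor
        · rintro ⟨hy, hlt⟩
          rcases (hmem y).1 hy with rfl | ⟨u, hu, rfl⟩
          · left; rfl
          · right; exact ⟨u, ⟨hu, by omega⟩, rfl⟩
        · rintro (rfl | ⟨u, ⟨hu, hlt⟩, rfl⟩)
          · exact ⟨(hmem 0).2 (Or.inl rfl), by omega⟩
          · exact ⟨(hmem _).2 (Or.inr ⟨u, hu, rfl⟩), by omega⟩
      rw [hcard, Finset.card_insert_of_notMem (by simp), Finset.card_image_of_injective _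
        (add_left_injective 1)]
      omega


/-- divided beta set of residue class s -/
def Sdiv (k N : ℕ) (lam : YoungDiagram) (s : ℕ) : Finset ℕ :=
  ((myBeta N lam).filter fun b => b % k = s).image fun b => b / k

lemma myBeta_step {lam : YoungDiagram} {N k : ℕ} (hN : lam.colLen 0 ≤ N) :
    myBeta (N + k) lam = (myBeta N lam).image (· + k) ∪ Finset.range k := by
  ext x
  simp only [Finset.mem_union, Finset.mem_image, Finset.mem_range, mem_myBeta]
  constructor
  · rintro ⟨i, hi, rfl⟩
    by_cases h : i < N
    · left
      refine ⟨lam.rowLen i + (N - 1 - i), ⟨i, h, rfl⟩, by omega⟩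
    · right
      rw [rowLen_eq_zero_of_colLen_le lam (by omega)]
      omega
  · rintro (⟨y, ⟨i, hi, rfl⟩, rfl⟩ | hx)
    · exact ⟨i, by omega, by omega⟩
    · refine ⟨N + k - 1 - x, by omega, ?_⟩
      rw [rowLen_eq_zero_of_colLen_le lam (by omega)]
      omega

lemma Sdiv_step {lam : YoungDiagram} {N k s : ℕ} (hk : 0 < k) (hs : s < k)
    (hN : lam.colLen 0 ≤ N) :
    Sdiv k (N + k) lam s = insert 0 ((Sdiv k N lam s).image (· + 1)) := by
  unfold Sdiv
  rw [myBeta_step hN]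
  ext x
  simp only [Finset.mem_image, Finset.mem_filter, Finset.mem_union, Finset.mem_insert,
    Finset.mem_range]
  constructor
  · rintro ⟨b, ⟨(⟨y, hy, rfl⟩ | hb), hmod⟩, rfl⟩
    · right
      rw [Nat.add_mod_right] at hmod
      rw [Nat.add_div_right _ hk]
      exact ⟨y / k, ⟨y, ⟨hy, hmod⟩, rfl⟩, rfl⟩
    · left
      rw [Nat.mod_eq_of_lt hb] at hmod
      subst hmod
      exact Nat.div_eq_of_lt hb
  · rintro (rfl | ⟨z, ⟨y, ⟨hy, hmod⟩, rfl⟩, rfl⟩)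
    · exact ⟨s, ⟨Or.inr hs, Nat.mod_eq_of_lt hs⟩, Nat.div_eq_of_lt hs⟩
    · exact ⟨y + k, ⟨Or.inl ⟨y, hy, rfl⟩, by rw [Nat.add_mod_right]; exact hmod⟩,
        by rw [Nat.add_div_right _ hk]⟩

lemma cells_Sdiv_step {lam : YoungDiagram} {N k s : ℕ} (hk : 0 < k) (hs : s < k)
    (hN : lam.colLen 0 ≤ N) :
    cellsOfBetaSet (Sdiv k (N + k) lam s) = cellsOfBetaSet (Sdiv k N lam s) := by
  rw [Sdiv_step hk hs hN, cellsOfBetaSet_shift]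

lemma colLen_le_numRowsPad (k : ℕ) (hk : 0 < k) (lam : YoungDiagram) :
    lam.colLen 0 ≤ numRowsPad k lam := by
  unfold numRowsPad
  have h1 := Nat.div_add_mod (lam.colLen 0 + k - 1) k
  have h2 := Nat.mod_lt (lam.colLen 0 + k - 1) hk
  omega

lemma kQuotientCells_eq_cells_Sdiv {lam : YoungDiagram} {k : ℕ} (hk : 0 < k) (s : Fin k)
    (N : ℕ) (hN : ∃ j, N = numRowsPad k lam + j * k) :
    kQuotientCells k lam s = cellsOfBetaSet (Sdiv k N lam (s : ℕ)) := by
  obtain ⟨j, rfl⟩ := hN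
  induction j with
  | zero => rw [show numRowsPad k lam + 0 * k = numRowsPad k lam by ring]; rfl
  | succ n ih =>
      rw [show numRowsPad k lam + (n+1) * k = (numRowsPad k lam + n * k) + k by ring,
        cells_Sdiv_step hk s.isLt (le_trans (colLen_le_numRowsPad k hk lam) (by omega))]
      exact ih


lemma path_cross {S : Finset (ℕ × ℕ)} {x y : ℕ × ℕ}
    (h : Relation.ReflTransGen (fun a b => a ∈ S ∧ b ∈ S ∧ Adj a b) x y) (i : ℕ) :
    i < x.1 → y.1 ≤ i → ∃ w z : ℕ × ℕ, w ∈ S ∧ z ∈ S ∧ w.1 = i ∧ z.1 = i + 1 ∧ w.2 = z.2 := by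
  induction h with
  | refl => intro h1 h2; omega
  | @tail b c h1 h2 ih =>
      intro hx hy
      by_cases hb : i < b.1
      · obtain ⟨hbS, hcS, hadj⟩ := h2
        rcases hadj with ⟨he, _⟩ | ⟨hcol, hv | hv⟩
        · omega
        · exact ⟨c, b, hcS, hbS, by omega, by omega, hcol.symm⟩
        · omega
      · exact ih hx (by omega)

section StripStructure

variable {k : ℕ} {mu nu : YoungDiagram} (h : IsBorderStripOfSize k mu nu)

lemma mem_strip_iff (i j : ℕ) :
    (i, j) ∈ nu.cells \ mu.cells ↔ mu.rowLen i ≤ j ∧ j < nu.rowLen i := by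
  simp only [Finset.mem_sdiff, YoungDiagram.mem_cells, YoungDiagram.mem_iff_lt_rowLen]
  omega

lemma rowLen_mono_of_subset (hsub : mu.cells ⊆ nu.cells) (i : ℕ) :
    mu.rowLen i ≤ nu.rowLen i := by
  by_contra hc
  have h1 : (i, nu.rowLen i) ∈ mu := by rw [YoungDiagram.mem_iff_lt_rowLen]; omega
  have h2 := hsub ((YoungDiagram.mem_cells _).2 h1)
  rw [YoungDiagram.mem_cells, YoungDiagram.mem_iff_lt_rowLen] at h2
  omega

include h in
lemma strip_no_stack (i : ℕ) : nu.rowLen (i + 1) ≤ mu.rowLen i + 1 := by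
  obtain ⟨hsub, hcard, hconn, h22⟩ := h
  by_contra hc
  push_neg at hc
  set j' := nu.rowLen (i + 1) - 1 with hj'
  have hmono := rowLen_mono_of_subset hsub (i+1)
  have hnui : nu.rowLen (i+1) ≤ nu.rowLen i := nu.rowLen_anti i (i+1) (by omega)
  have hmu : mu.rowLen (i+1) ≤ mu.rowLen i := mu.rowLen_anti i (i+1) (by omega)
  apply h22
  refine ⟨i, j' - 1, ?_, ?_, ?_, ?_⟩
  · rw [mem_strip_iff]; omega
  · -- (i+1, j'-1) : in nu, and not in mu else (i,j'-1) in mu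
    rw [mem_strip_iff]
    constructor
    · by_contra hcc
      push_neg at hcc
      have h1 : (i+1, j'-1) ∈ mu := by rw [YoungDiagram.mem_iff_lt_rowLen]; omega
      have h2 : (i, j'-1) ∈ mu := mu.up_left_mem (by omega) le_rfl h1
      rw [YoungDiagram.mem_iff_lt_rowLen] at h2
      omega
    · omega
  · rw [show j' - 1 + 1 = j' by omega, mem_strip_iff]; omega
  · rw [show j' - 1 + 1 = j' by omega, mem_strip_iff]; omega

include h in
lemma strip_structure (hk : 0 < k) :
    ∃ a b : ℕ, a ≤ b ∧
      (∀ i, i < a ∨ b < i → nu.rowLen i = mu.rowLen i) ∧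
      (∀ i, a ≤ i → i ≤ b → mu.rowLen i < nu.rowLen i) ∧
      (∀ i, a ≤ i → i < b → nu.rowLen (i+1) = mu.rowLen i + 1) := by
  obtain ⟨hsub, hcard, hconn, h22⟩ := h
  set S := nu.cells \ mu.cells with hS
  have hne : S.Nonempty := by
    rw [← Finset.card_pos, hcard]; exact hk
  have hRne : (S.image Prod.fst).Nonempty := hne.image _
  set a := (S.image Prod.fst).min' hRne with ha
  set b := (S.image Prod.fst).max' hRne with hb
  have hab : a ≤ b := Finset.min'_le _ _ ((S.image Prod.fst).max'_mem hRne)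
  obtain ⟨xb, hxbS, hxb1⟩ : ∃ x, x ∈ S ∧ x.1 = b := by
    obtain ⟨x, hx, hx1⟩ := Finset.mem_image.1 ((S.image Prod.fst).max'_mem hRne)
    exact ⟨x, hx, hx1⟩
  obtain ⟨xa, hxaS, hxa1⟩ : ∃ x, x ∈ S ∧ x.1 = a := by
    obtain ⟨x, hx, hx1⟩ := Finset.mem_image.1 ((S.image Prod.fst).min'_mem hRne)
    exact ⟨x, hx, hx1⟩
  have hrow : ∀ i, a ≤ i → i ≤ b → ∃ j, (i, j) ∈ S := by
    intro i hai hib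
    rcases eq_or_lt_of_le hib with rfl | hib'
    · exact ⟨xb.2, by rwa [← hxb1, Prod.mk.eta]⟩
    · obtain ⟨w, z, hwS, _, hw1, _, _⟩ := path_cross (hconn xb hxbS xa hxaS) i
        (by omega) (by omega)
      exact ⟨w.2, by rwa [← hw1, Prod.mk.eta]⟩
  refine ⟨a, b, hab, ?_, ?_, ?_⟩
  · intro i hi
    have : ∀ j, (i, j) ∉ S := by
      intro j hj
      have h1 : i ∈ S.image Prod.fst := Finset.mem_image.2 ⟨(i,j), hj, rfl⟩
      rcases hi with hlt | hgt
      · exact absurd (Finset.min'_le _ _ h1) (by omega)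
      · exact absurd (Finset.le_max' _ _ h1) (by omega)
    have hmono := rowLen_mono_of_subset hsub i
    by_contra hc
    exact this (mu.rowLen i) ((mem_strip_iff _ _).2 (by omega))
  · intro i hai hib
    obtain ⟨j, hj⟩ := hrow i hai hib
    rw [mem_strip_iff] at hj
    omega
  · intro i hai hib
    have hle := strip_no_stack ⟨hsub, hcard, hconn, h22⟩ i
    -- need nu.rowLen (i+1) ≥ mu.rowLen i + 1 from vertical adjacency
    obtain ⟨j1, hj1⟩ := hrow i hai (by omega)
    obtain ⟨j2, hj2⟩ := hrow (i+1) (by omega) hib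
    obtain ⟨w, z, hwS, hzS, hw1, hz1, hcol⟩ :=
      path_cross (hconn ((i+1), j2) hj2 (i, j1) hj1) i (by omega) (by omega)
    have hw : (i, w.2) ∈ S := by rwa [← hw1, Prod.mk.eta]
    have hz : (i+1, w.2) ∈ S := by rw [hcol, ← hz1, Prod.mk.eta]; exact hzS
    rw [mem_strip_iff] at hw hz
    omega

end StripStructure


lemma exists_isTail {S : Finset (ℕ × ℕ)} (h : S.Nonempty) : ∃ x, IsTail S x := by
  obtain ⟨x, hx, hmin⟩ := S.exists_min_image contentZ h
  exact ⟨x, hx, hmin⟩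

lemma isTail_tailCell {S : Finset (ℕ × ℕ)} (h : S.Nonempty) : IsTail S (tailCell S) := by
  rw [tailCell, dif_pos (exists_isTail h)]
  exact (exists_isTail h).choose_spec

section StripBeta

variable {k : ℕ} {mu nu : YoungDiagram}

lemma strip_beta (hk : 0 < k) (h : IsBorderStripOfSize k mu nu)
    {N : ℕ} (hN : nu.colLen 0 ≤ N) :
    ∃ a b : ℕ, a ≤ b ∧ b < N ∧
      (∀ i, i < a ∨ b < i → nu.rowLen i = mu.rowLen i) ∧
      (∀ i, a ≤ i → i ≤ b → mu.rowLen i < nu.rowLen i) ∧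
      (∀ i, a ≤ i → i < b → nu.rowLen (i+1) = mu.rowLen i + 1) ∧
      (mu.rowLen b + (N - 1 - b)) + k ∈ myBeta N nu ∧
      (mu.rowLen b + (N - 1 - b)) ∉ myBeta N nu ∧
      (∀ x, x ∈ myBeta N mu ↔
        ((x ∈ myBeta N nu ∧ x ≠ (mu.rowLen b + (N - 1 - b)) + k) ∨
          x = mu.rowLen b + (N - 1 - b))) ∧
      (∀ x, IsTail (nu.cells \ mu.cells) x →
        contentZ x = ((mu.rowLen b + (N - 1 - b) : ℕ) : ℤ) - N + 1) ∧
      (nu.cells \ mu.cells).image Prod.fst = Finset.Icc a b := by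
  obtain ⟨a, b, hab, hout, hin, hstep⟩ := strip_structure h hk
  obtain ⟨hsub, hcard, hconn, h22⟩ := h
  have hmono : ∀ i, mu.rowLen i ≤ nu.rowLen i := rowLen_mono_of_subset hsub
  have hbN : b < nu.colLen 0 := by
    have h1 : 0 < nu.rowLen b := by have := hin b hab le_rfl; omega
    have h2 : (b, 0) ∈ nu := by rw [YoungDiagram.mem_iff_lt_rowLen]; omega
    rw [YoungDiagram.mem_iff_lt_colLen] at h2; exact h2
  have hbN' : b < N := lt_of_lt_of_le hbN hN
  -- strip as biUnion
  have hstripeq : nu.cells \ mu.cells =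
      (Finset.Icc a b).biUnion
        (fun i => (Finset.Ico (mu.rowLen i) (nu.rowLen i)).image (fun j => (i, j))) := by
    ext ⟨i, j⟩
    rw [mem_strip_iff]
    simp only [Finset.mem_biUnion, Finset.mem_Icc, Finset.mem_image, Finset.mem_Ico]
    constructor
    · rintro ⟨h1, h2⟩
      refine ⟨i, ?_, j, ⟨h1, h2⟩, rfl⟩
      by_contra hc
      have := hout i (by omega)
      omega
    · rintro ⟨i', hi', j', hj', heq⟩
      obtain ⟨rfl, rfl⟩ := Prod.mk.injEq .. ▸ heq
      omega
  have himg : (nu.cells \ mu.cells).image Prod.fst = Finset.Icc a b := by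
    ext i
    simp only [Finset.mem_image, Finset.mem_Icc]
    constructor
    · rintro ⟨⟨i', j⟩, hx, rfl⟩
      rw [mem_strip_iff] at hx
      by_contra hc
      have := hout i' (by omega)
      omega
    · rintro ⟨h1, h2⟩
      exact ⟨(i, mu.rowLen i), (mem_strip_iff _ _).2 ⟨le_rfl, hin i h1 h2⟩, rfl⟩
  have hksum : ∑ i ∈ Finset.Icc a b, (nu.rowLen i - mu.rowLen i) = k := by
    rw [← hcard, hstripeq, Finset.card_biUnion]
    · apply Finset.sum_congr rfl
      intro i _
      rw [Finset.card_image_of_injective _ (fun x y hxy => by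
        simpa using (Prod.mk.injEq .. ▸ hxy).2), Nat.card_Ico]
    · intro i _ j _ hij
      simp only [Finset.disjoint_left, Finset.mem_image, Finset.mem_Ico]
      rintro x ⟨x1, _, rfl⟩ ⟨x2, _, hx2⟩
      exact hij ((Prod.mk.injEq .. ▸ hx2).1).symm
  -- telescoping
  have htel : ∀ d, a + d ≤ b →
      (∑ i ∈ Finset.Icc a (a + d), (nu.rowLen i - mu.rowLen i)) + mu.rowLen (a + d)
        = nu.rowLen a + d := by
    intro d
    induction d with
    | zero =>
        intro _
        simp only [Nat.add_zero, Finset.Icc_self, Finset.sum_singleton]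
        have := hmono a
        omega
    | succ n ih =>
        intro hd
        have h1 := ih (by omega)
        rw [show a + (n+1) = (a + n) + 1 by omega,
          Finset.sum_Icc_succ_top (by omega : a ≤ a + n + 1)]
        have h2 := hstep (a + n) (by omega) (by omega)
        have h3 := hmono (a + n + 1)
        omega
  have hba : a + (b - a) = b := by omega
  have hkey : k + mu.rowLen b = nu.rowLen a + (b - a) := by
    have := htel (b - a) (by omega)
    rw [hba] at this
    omega
  set b0 := mu.rowLen b + (N - 1 - b) with hb0
  have hb0k : b0 + k = nu.rowLen a + (N - 1 - a) := by omega
  have hmem1 : b0 + k ∈ myBeta N nu := mem_myBeta.2 ⟨a, by omega, hb0k⟩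
  have hmem2 : b0 ∉ myBeta N nu := by
    rw [mem_myBeta]
    rintro ⟨j, hj, hjeq⟩
    rcases lt_or_ge j a with hja | hja
    · -- f_nu j = f_mu j, and f_mu injective with b0 = f_mu b
      have h1 : nu.rowLen j = mu.rowLen j := hout j (Or.inl hja)
      have : j = b := myBeta_inj (lam := mu) hj hbN' (by omega)
      omega
    · rcases le_or_gt j b with hjb | hjb
      · -- f_nu j ≥ f_nu b > f_mu b = b0
        have h1 : nu.rowLen b + (N - 1 - b) ≤ nu.rowLen j + (N - 1 - j) := by
          rcases eq_or_lt_of_le hjb with rfl | hlt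
          · exact le_rfl
          · exact le_of_lt (myBeta_strictAnti nu N hlt hbN')
        have h2 := hin b hab le_rfl
        omega
      · have h1 : nu.rowLen j = mu.rowLen j := hout j (Or.inr hjb)
        have : j = b := myBeta_inj (lam := mu) hj hbN' (by omega)
        omega
  refine ⟨a, b, hab, hbN', hout, hin, hstep, hmem1, hmem2, ?_, ?_, himg⟩
  · intro x
    constructor
    · rw [mem_myBeta]
      rintro ⟨i, hi, rfl⟩
      rcases lt_or_ge i a with hia | hia
      · left
        refine ⟨mem_myBeta.2 ⟨i, hi, by rw [hout i (Or.inl hia)]⟩, ?_⟩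
        rw [hb0k]
        intro hc
        have heq : nu.rowLen i + (N - 1 - i) = nu.rowLen a + (N - 1 - a) := by
          rw [hout i (Or.inl hia)]; omega
        have : i = a := myBeta_inj (lam := nu) hi (by omega) heq
        omega
      · rcases lt_or_ge i b with hib | hib
        · left
          have h2 := hstep i hia hib
          refine ⟨mem_myBeta.2 ⟨i + 1, by omega, by omega⟩, ?_⟩
          rw [hb0k]
          intro hc
          have heq : nu.rowLen (i+1) + (N - 1 - (i+1)) = nu.rowLen a + (N - 1 - a) := by
            omega
          have : i + 1 = a := myBeta_inj (lam := nu) (by omega) (by omega) heq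
          omega
        · rcases eq_or_lt_of_le hib with rfl | hib'
          · right; rfl
          · left
            refine ⟨mem_myBeta.2 ⟨i, hi, by rw [hout i (Or.inr hib')]⟩, ?_⟩
            rw [hb0k]
            intro hc
            have heq : nu.rowLen i + (N - 1 - i) = nu.rowLen a + (N - 1 - a) := by
              rw [hout i (Or.inr hib')]; omega
            have : i = a := myBeta_inj (lam := nu) hi (by omega) heq
            omega
    · rintro (⟨hx, hne⟩ | rfl)
      · rw [mem_myBeta] at hx ⊢
        obtain ⟨j, hj, rfl⟩ := hx
        have hja : j ≠ a := by
          intro hc; subst hc; rw [hb0k] at hne; exact hne rfl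
        rcases lt_or_ge j a with h1 | h1
        · exact ⟨j, hj, by rw [hout j (Or.inl h1)]⟩
        · rcases le_or_gt j b with h2 | h2
          · have hja' : a < j := by omega
            have h3 := hstep (j - 1) (by omega) (by omega)
            refine ⟨j - 1, by omega, ?_⟩
            rw [show j - 1 + 1 = j by omega] at h3
            omega
          · exact ⟨j, hj, by rw [hout j (Or.inr h2)]⟩
      · exact mem_myBeta.2 ⟨b, hbN', rfl⟩
  · -- tail content
    rintro x ⟨hxS, hmin⟩
    have hcell : (b, mu.rowLen b) ∈ nu.cells \ mu.cells :=
      (mem_strip_iff _ _).2 ⟨le_rfl, hin b hab le_rfl⟩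
    have h1 : contentZ x ≤ contentZ (b, mu.rowLen b) := hmin _ hcell
    have h2 : contentZ (b, mu.rowLen b) ≤ contentZ x := by
      obtain ⟨i, j⟩ := x
      rw [mem_strip_iff] at hxS
      have hib : i ≤ b := by
        by_contra hc
        have := hout i (Or.inr (by omega))
        omega
      have hmu : mu.rowLen b ≤ mu.rowLen i := mu.rowLen_anti i b hib
      simp only [contentZ]
      push_cast
      omega
    have : contentZ x = contentZ (b, mu.rowLen b) := le_antisymm h1 h2
    rw [this]
    simp only [contentZ]
    push_cast
    omega

end StripBeta

section CellsStep

lemma card_filter_insert {α : Type*} [DecidableEq α] (t : Finset α) (x : α) (hx : x ∉ t)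
    (p : α → Prop) [DecidablePred p] :
    ((insert x t).filter p).card = (t.filter p).card + (if p x then 1 else 0) := by
  rw [Finset.filter_insert]
  split
  · rw [Finset.card_insert_of_notMem (by intro hc; exact hx (Finset.mem_of_mem_filter _ hc))]
  · rw [Nat.add_zero]

lemma rank_inj {S : Finset ℕ} {b1 b2 : ℕ} (h1 : b1 ∈ S) (h2 : b2 ∈ S)
    (h : (S.filter fun y => b1 < y).card = (S.filter fun y => b2 < y).card) : b1 = b2 := by
  have key : ∀ c1 c2 : ℕ, c1 ∈ S → c2 ∈ S → c1 < c2 →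
      (S.filter fun y => c2 < y).card < (S.filter fun y => c1 < y).card := by
    intro c1 c2 hc1 hc2 hlt
    apply Finset.card_lt_card
    constructor
    · intro y hy
      rw [Finset.mem_filter] at hy ⊢
      exact ⟨hy.1, by omega⟩
    · intro hsub
      have : c2 ∈ S.filter fun y => c1 < y := Finset.mem_filter.2 ⟨hc2, hlt⟩
      have := Finset.mem_filter.1 (hsub this)
      omega
  rcases lt_trichotomy b1 b2 with hl | he | hl
  · have := key b1 b2 h1 h2 hl; omega
  · exact he
  · have := key b2 b1 h2 h1 hl; omega

lemma cells_step {S : Finset ℕ} {q : ℕ} (h1 : q + 1 ∈ S) (h2 : q ∉ S) :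
    cellsOfBetaSet S =
      insert (((S.erase (q+1)).filter fun y => q+1 < y).card,
              q - ((S.erase (q+1)).filter fun y => y < q).card)
        (cellsOfBetaSet (insert q (S.erase (q+1)))) ∧
    (((S.erase (q+1)).filter fun y => q+1 < y).card,
      q - ((S.erase (q+1)).filter fun y => y < q).card) ∉
        cellsOfBetaSet (insert q (S.erase (q+1))) ∧
    S.card = ((S.erase (q+1)).filter fun y => y < q).card +
      ((S.erase (q+1)).filter fun y => q+1 < y).card + 1 ∧
    ((S.erase (q+1)).filter fun y => y < q).card ≤ q := by
  classical
  set C := S.erase (q+1) with hC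
  set l := (C.filter fun y => y < q).card with hl
  set r := (C.filter fun y => q+1 < y).card with hr
  set S' := insert q C with hS'
  have hS : S = insert (q+1) C := (Finset.insert_erase h1).symm
  have hq1c : q+1 ∉ C := Finset.notMem_erase _ _
  have hqc : q ∉ C := fun hc => h2 (Finset.mem_of_mem_erase hc)
  have hcom : ∀ y ∈ C, y < q ∨ q + 1 < y := by
    intro y hy
    obtain ⟨hne, hyS⟩ := Finset.mem_erase.1 hy
    have : y ≠ q := fun h => h2 (h ▸ hyS)
    omega
  -- card computations
  have cardS : ∀ p : ℕ → Prop, ∀ _ : DecidablePred p,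
      (S.filter p).card = (C.filter p).card + (if p (q+1) then 1 else 0) := by
    intro p hp
    rw [hS]
    exact card_filter_insert C (q+1) hq1c p
  have cardS' : ∀ p : ℕ → Prop, ∀ _ : DecidablePred p,
      (S'.filter p).card = (C.filter p).card + (if p q then 1 else 0) := by
    intro p hp
    exact card_filter_insert C q hqc p
  have hgtq : (C.filter fun y => q < y) = C.filter fun y => q + 1 < y := by
    ext y
    simp only [Finset.mem_filter]
    constructor
    · rintro ⟨hy, h⟩; exact ⟨hy, by rcases hcom y hy with h'|h' <;> omega⟩
    · rintro ⟨hy, h⟩; exact ⟨hy, by omega⟩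
  have hltq1 : (C.filter fun y => y < q + 1) = C.filter fun y => y < q := by
    ext y
    simp only [Finset.mem_filter]
    constructor
    · rintro ⟨hy, h⟩; exact ⟨hy, by rcases hcom y hy with h'|h' <;> omega⟩
    · rintro ⟨hy, h⟩; exact ⟨hy, by omega⟩
  -- c2 : ranks of the moved element
  have c2a : (S.filter fun y => q+1 < y).card = r := by
    rw [cardS _ inferInstance, if_neg (by omega)]; omega
  have c2b : (S'.filter fun y => q < y).card = r := by
    rw [cardS' _ inferInstance, if_neg (by omega), hgtq]; omega
  have c3a : (S.filter fun y => y < q+1).card = l := by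
    rw [cardS _ inferInstance, if_neg (by omega), hltq1]; omega
  have c3b : (S'.filter fun y => y < q).card = l := by
    rw [cardS' _ inferInstance, if_neg (by omega)]; omega
  have c4 : l ≤ q := by
    calc l ≤ (Finset.range q).card := by
            apply Finset.card_le_card
            intro y hy
            rw [Finset.mem_range]
            exact (Finset.mem_filter.1 hy).2
      _ = q := Finset.card_range q
  have c5 : S.card = l + r + 1 := by
    have h5 : (C.filter fun y => y < q).card +
        (C.filter fun y => ¬ y < q).card = C.card :=
      Finset.card_filter_add_card_filter_not _
    have h6 : (C.filter fun y => ¬ y < q) = C.filter fun y => q + 1 < y := by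
      ext y
      simp only [Finset.mem_filter]
      constructor
      · rintro ⟨hy, h⟩; exact ⟨hy, by rcases hcom y hy with h'|h' <;> omega⟩
      · rintro ⟨hy, h⟩; exact ⟨hy, by omega⟩
    rw [hS, Finset.card_insert_of_notMem hq1c]
    rw [h6] at h5
    omega
  -- common elements have identical filter cards
  have c1a : ∀ b' ∈ C, (S.filter fun y => y < b').card = (S'.filter fun y => y < b').card := by
    intro b' hb'
    rw [cardS _ inferInstance, cardS' _ inferInstance]
    rcases hcom b' hb' with h | h
    · rw [if_neg (by omega), if_neg (by omega)]
    · rw [if_pos (by omega), if_pos (by omega)]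
  have c1b : ∀ b' ∈ C, (S.filter fun y => b' < y).card = (S'.filter fun y => b' < y).card := by
    intro b' hb'
    rw [cardS _ inferInstance, cardS' _ inferInstance]
    rcases hcom b' hb' with h | h
    · rw [if_pos (by omega), if_pos (by omega)]
    · rw [if_neg (by omega), if_neg (by omega)]
  have hmemS' : ∀ y, y ∈ S' ↔ y = q ∨ y ∈ C := by
    intro y; simp [hS', Finset.mem_insert]
  have hmemS : ∀ y, y ∈ S ↔ y = q + 1 ∨ y ∈ C := by
    intro y; rw [hS]; simp [Finset.mem_insert]
  refine ⟨?_, ?_, c5, c4⟩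
  · ext x
    simp only [mem_cellsOfBetaSet, Finset.mem_insert]
    constructor
    · rintro ⟨b, hb, hx1, hx2⟩
      rcases (hmemS b).1 hb with rfl | hbC
      · rw [c2a] at hx1
        rw [c3a] at hx2
        rcases Nat.lt_or_ge x.2 (q - l) with hlt | hge
        · right
          refine ⟨q, (hmemS' q).2 (Or.inl rfl), by rw [c2b]; exact hx1, by rw [c3b]; omega⟩
        · left
          have : x.2 = q - l := by omega
          rw [Prod.ext_iff]
          exact ⟨hx1, this⟩
      · right
        exact ⟨b, (hmemS' b).2 (Or.inr hbC), by rw [← c1b b hbC]; exact hx1,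
          by rw [← c1a b hbC]; exact hx2⟩
    · rintro (hx | ⟨b, hb, hx1, hx2⟩)
      · refine ⟨q + 1, h1, ?_, ?_⟩
        · rw [hx, c2a]
        · rw [hx, c3a]
          show q - l < q + 1 - l
          omega
      · rcases (hmemS' b).1 hb with hbq | hbC
        · rw [hbq] at hx1 hx2
          refine ⟨q + 1, h1, by rw [c2a, ← c2b]; exact hx1, by rw [c3a]; rw [c3b] at hx2; omega⟩
        · exact ⟨b, (hmemS b).2 (Or.inr hbC), by rw [c1b b hbC]; exact hx1,
            by rw [c1a b hbC]; exact hx2⟩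
  · intro hmem
    rw [mem_cellsOfBetaSet] at hmem
    obtain ⟨b, hb, hx1, hx2⟩ := hmem
    have hx1' : r = (S'.filter fun b' => b < b').card := hx1
    have hx2' : q - l < b - (S'.filter fun b' => b' < b).card := hx2
    have hbq : b = q := by
      apply rank_inj hb ((hmemS' q).2 (Or.inl rfl))
      rw [c2b, ← hx1']
    subst hbq
    rw [c3b] at hx2'
    omega

end CellsStep

section SdivRel

lemma mem_Sdiv {k N s x : ℕ} (hs : s < k) {lam : YoungDiagram} :
    x ∈ Sdiv k N lam s ↔ k * x + s ∈ myBeta N lam := by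
  have hk : 0 < k := by omega
  unfold Sdiv
  simp only [Finset.mem_image, Finset.mem_filter]
  constructor
  · rintro ⟨b, ⟨hb, hmod⟩, rfl⟩
    have : k * (b / k) + s = b := by
      have := Nat.div_add_mod b k
      omega
    rwa [this]
  · intro h
    refine ⟨k * x + s, ⟨h, ?_⟩, ?_⟩
    · rw [Nat.mul_add_mod, Nat.mod_eq_of_lt hs]
    · rw [Nat.mul_add_div hk, Nat.div_eq_of_lt hs, Nat.add_zero]

lemma quotient_step {k N : ℕ} {mu nu : YoungDiagram} {b0 : ℕ}
    (hmem1 : b0 + k ∈ myBeta N nu) (hmem2 : b0 ∉ myBeta N nu)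
    (hrel : ∀ x, x ∈ myBeta N mu ↔ ((x ∈ myBeta N nu ∧ x ≠ b0 + k) ∨ x = b0))
    {s : ℕ} (hs : s < k) :
    (s ≠ b0 % k → Sdiv k N mu s = Sdiv k N nu s) ∧
    (s = b0 % k →
      Sdiv k N mu s = insert (b0 / k) ((Sdiv k N nu s).erase (b0 / k + 1)) ∧
      b0 / k + 1 ∈ Sdiv k N nu s ∧ b0 / k ∉ Sdiv k N nu s) := by
  have hk : 0 < k := by omega
  have hdm := Nat.div_add_mod b0 k
  constructor
  · intro hne
    ext x
    rw [mem_Sdiv hs, mem_Sdiv hs, hrel]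
    have hxb : k * x + s ≠ b0 := by
      intro hc
      have : b0 % k = s := by rw [← hc, Nat.mul_add_mod, Nat.mod_eq_of_lt hs]
      omega
    have hxb' : k * x + s ≠ b0 + k := by
      intro hc
      have : (b0 + k) % k = s := by rw [← hc, Nat.mul_add_mod, Nat.mod_eq_of_lt hs]
      rw [Nat.add_mod_right] at this
      omega
    constructor
    · rintro (⟨h, _⟩ | h)
      · exact h
      · exact absurd h hxb
    · intro h
      exact Or.inl ⟨h, hxb'⟩
  · intro hseq
    have hb0 : b0 = k * (b0 / k) + s := by omega
    have hq1 : b0 + k = k * (b0 / k + 1) + s := by ring_nf; omega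
    refine ⟨?_, ?_, ?_⟩
    · ext x
      rw [mem_Sdiv hs, hrel, Finset.mem_insert, Finset.mem_erase, mem_Sdiv hs]
      constructor
      · rintro (⟨h, hne⟩ | h)
        · right
          refine ⟨?_, h⟩
          intro hc
          subst hc
          exact hne hq1.symm
        · left
          have : k * x = k * (b0 / k) := by omega
          exact Nat.eq_of_mul_eq_mul_left hk this
      · rintro (rfl | ⟨hne, h⟩)
        · right; omega
        · left
          refine ⟨h, ?_⟩
          intro hc
          rw [hq1] at hc
          have : x = b0 / k + 1 := by
            have : k * x = k * (b0 / k + 1) := by omega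
            exact Nat.eq_of_mul_eq_mul_left hk this
          exact hne this
    · rw [mem_Sdiv hs, ← hq1]; exact hmem1
    · rw [mem_Sdiv hs, ← hb0]; exact hmem2

lemma colLen_bot : (⊥ : YoungDiagram).colLen 0 = 0 := by
  by_contra h
  have : (0, 0) ∈ (⊥ : YoungDiagram) := by
    rw [YoungDiagram.mem_iff_lt_colLen]; omega
  simp at this

lemma kQuotient_bot {k : ℕ} (hk : 0 < k) (s : Fin k) :
    kQuotientCells k (⊥ : YoungDiagram) s = ∅ := by
  have h0 : numRowsPad k ⊥ = 0 := by
    unfold numRowsPad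
    rw [colLen_bot, Nat.zero_add, Nat.div_eq_of_lt (by omega), Nat.mul_zero]
  unfold kQuotientCells betaSet
  rw [h0]
  simp [cellsOfBetaSet]

lemma Sdiv_bot {k N s : ℕ} (hs : s < k) (hdvd : k ∣ N) :
    Sdiv k N (⊥ : YoungDiagram) s = Finset.range (N / k) := by
  obtain ⟨t, rfl⟩ := hdvd
  have hk : 0 < k := by omega
  ext x
  rw [mem_Sdiv hs, myBeta_bot, Finset.mem_range, Finset.mem_range,
    Nat.mul_div_cancel_left t hk]
  constructor
  · intro h
    by_contra hc
    push_neg at hc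
    have : k * t ≤ k * x := Nat.mul_le_mul_left k hc
    omega
  · intro h
    have h1 : k * (x + 1) ≤ k * t := Nat.mul_le_mul_left k (by omega)
    have h2 : k * (x + 1) = k * x + k := by ring
    omega

end SdivRel


section Plumbing

variable {lam : YoungDiagram} {k m : ℕ}

lemma isStrip_step (B : BST lam k m) {i : ℕ} (h1 : 1 ≤ i) (h2 : i ≤ m) :
    IsBorderStripOfSize k (B.flagAt (i-1)) (B.flagAt i) := by
  obtain ⟨j, rfl⟩ : ∃ j, i = j + 1 := ⟨i - 1, by omega⟩
  have hj : j < m := by omega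
  have hs := B.strips ⟨j, hj⟩
  have e1 : B.flagAt (j + 1 - 1) = B.flag (Fin.castSucc ⟨j, hj⟩) := by
    unfold BST.flagAt
    congr 1
    apply Fin.ext
    simp [Fin.castSucc]
    omega
  have e2 : B.flagAt (j + 1) = B.flag (Fin.succ ⟨j, hj⟩) := by
    unfold BST.flagAt
    congr 1
    apply Fin.ext
    simp [Fin.succ]
    omega
  rw [e1, e2]
  exact hs

lemma flagAt_zero (B : BST lam k m) : B.flagAt 0 = ⊥ := by
  unfold BST.flagAt
  have : (⟨min 0 m, by omega⟩ : Fin (m+1)) = 0 := by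
    apply Fin.ext; simp
  rw [this, B.first]

lemma flagAt_top (B : BST lam k m) {i : ℕ} (h : m ≤ i) : B.flagAt i = lam := by
  unfold BST.flagAt
  have : (⟨min i m, by omega⟩ : Fin (m+1)) = Fin.last m := by
    apply Fin.ext; simp [Fin.last]; omega
  rw [this, B.last]

lemma flagAt_succ_subset (B : BST lam k m) (i : ℕ) :
    (B.flagAt i).cells ⊆ (B.flagAt (i+1)).cells := by
  rcases le_or_gt (i+1) m with h | h
  · have := (isStrip_step B (i := i+1) (by omega) h).1
    rwa [Nat.add_sub_cancel] at this
  · have : B.flagAt (i+1) = B.flagAt i := by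
      unfold BST.flagAt
      congr 2
      omega
    rw [this]

lemma flagAt_subset (B : BST lam k m) {i j : ℕ} (h : i ≤ j) :
    (B.flagAt i).cells ⊆ (B.flagAt j).cells := by
  induction j with
  | zero => rw [Nat.le_zero.1 h]
  | succ n ih =>
      rcases Nat.lt_or_ge i (n+1) with h' | h'
      · exact (ih (by omega)).trans (flagAt_succ_subset B n)
      · have : i = n + 1 := by omega
        rw [this]

lemma colLen_le_of_subset {mu nu : YoungDiagram} (h : mu.cells ⊆ nu.cells) :
    mu.colLen 0 ≤ nu.colLen 0 := by
  by_contra hc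
  push_neg at hc
  have h1 : (nu.colLen 0, 0) ∈ mu := by rw [YoungDiagram.mem_iff_lt_colLen]; omega
  have h2 := h ((YoungDiagram.mem_cells _).2 h1)
  rw [YoungDiagram.mem_cells, YoungDiagram.mem_iff_lt_colLen] at h2
  omega

lemma flagAt_colLen_le (B : BST lam k m) (i : ℕ) :
    (B.flagAt i).colLen 0 ≤ lam.colLen 0 := by
  have := flagAt_subset B (le_max_left i m)
  rw [flagAt_top B (le_max_right i m)] at this
  exact colLen_le_of_subset this

lemma numRowsPad_dvd (k : ℕ) (lam : YoungDiagram) : k ∣ numRowsPad k lam :=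
  Dvd.intro _ rfl

lemma exists_pad {k : ℕ} (hk : 0 < k) {mu nu : YoungDiagram}
    (h : mu.colLen 0 ≤ nu.colLen 0) :
    ∃ j, numRowsPad k nu = numRowsPad k mu + j * k := by
  unfold numRowsPad
  set cm := (mu.colLen 0 + k - 1) / k
  set cn := (nu.colLen 0 + k - 1) / k
  have hle : cm ≤ cn := Nat.div_le_div_right (by omega)
  refine ⟨cn - cm, ?_⟩
  rw [Nat.mul_comm k cn, Nat.mul_comm k cm, Nat.sub_mul]
  have h1 : cm * k ≤ cn * k := Nat.mul_le_mul_right k hle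
  omega

lemma quotient_transfer (B : BST lam k m) (hk : 0 < k) (s : Fin k) (i : ℕ) :
    kQuotientCells k (B.flagAt i) s
      = cellsOfBetaSet (Sdiv k (numRowsPad k lam) (B.flagAt i) (s : ℕ)) := by
  apply kQuotientCells_eq_cells_Sdiv hk
  exact exists_pad hk (flagAt_colLen_le B i)

lemma balanced (hk : 0 < k) (B : BST lam k m) :
    ∀ i, i ≤ m → ∀ s : ℕ, s < k →
      (Sdiv k (numRowsPad k lam) (B.flagAt i) s).card = numRowsPad k lam / k := by
  set N := numRowsPad k lam with hN
  have hNcol : ∀ i, (B.flagAt i).colLen 0 ≤ N := by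
    intro i
    exact le_trans (flagAt_colLen_le B i) (colLen_le_numRowsPad k hk lam)
  intro i
  induction i with
  | zero =>
      intro _ s hs
      rw [flagAt_zero B, Sdiv_bot hs (numRowsPad_dvd k lam), Finset.card_range]
  | succ n ih =>
      intro h s hs
      have hstrip := isStrip_step B (i := n+1) (by omega) h
      rw [Nat.add_sub_cancel] at hstrip
      obtain ⟨a, b, hab, hbN, hout, hin, hstep, hmem1, hmem2, hrel, htail, himg⟩ :=
        strip_beta hk hstrip (hNcol (n+1))
      set b0 := (B.flagAt n).rowLen b + (N - 1 - b) with hb0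
      have hq := quotient_step hmem1 hmem2 hrel hs
      have hmu := ih (by omega) s hs
      by_cases hcase : s = b0 % k
      · obtain ⟨heq, hqin, hqout⟩ := hq.2 hcase
        rw [heq, Finset.card_insert_of_notMem
            (fun hc => hqout (Finset.mem_of_mem_erase hc)),
          Finset.card_erase_of_mem hqin] at hmu
        have hpos : 0 < (Sdiv k N (B.flagAt (n+1)) s).card :=
          Finset.card_pos.2 ⟨_, hqin⟩
        omega
      · rw [hq.1 hcase] at hmu
        exact hmu

lemma stripCells_nonempty (hk : 0 < k) (B : BST lam k m) {i : ℕ}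
    (h1 : 1 ≤ i) (h2 : i ≤ m) : (B.stripCells i).Nonempty := by
  have := (isStrip_step B h1 h2).2.1
  rw [← Finset.card_pos]
  unfold BST.stripCells
  omega

lemma main_step (hk : 0 < k) (B : BST lam k m) {i : ℕ} (h1 : 1 ≤ i) (h2 : i ≤ m)
    {s : Fin k} {x : ℕ × ℕ}
    (hx : x ∈ kQuotientCells k (B.flagAt i) s)
    (hx' : x ∉ kQuotientCells k (B.flagAt (i - 1)) s) :
    contentZ (tailCell (B.stripCells i)) - 1 = (k : ℤ) * (contentZ x - 1) + (s : ℤ) := by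
  set N := numRowsPad k lam with hNdef
  have hNdvd : k ∣ N := numRowsPad_dvd k lam
  have hNcol : (B.flagAt i).colLen 0 ≤ N :=
    le_trans (flagAt_colLen_le B i) (colLen_le_numRowsPad k hk lam)
  have hstrip := isStrip_step B h1 h2
  obtain ⟨a, b, hab, hbN, hout, hin, hstep, hmem1, hmem2, hrel, htail, himg⟩ :=
    strip_beta hk hstrip hNcol
  set b0 := (B.flagAt (i-1)).rowLen b + (N - 1 - b) with hb0
  rw [quotient_transfer B hk s i] at hx
  rw [quotient_transfer B hk s (i-1)] at hx'
  have hq := quotient_step hmem1 hmem2 hrel s.isLt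
  by_cases hcase : (s : ℕ) = b0 % k
  · obtain ⟨heq, hqin, hqout⟩ := hq.2 hcase
    obtain ⟨hcells, hnewout, hcard, hlq⟩ := cells_step hqin hqout
    set S := Sdiv k N (B.flagAt i) (s : ℕ) with hSdef
    set q := b0 / k with hqdef
    set l := ((S.erase (q+1)).filter fun y => y < q).card with hldef
    set r := ((S.erase (q+1)).filter fun y => q+1 < y).card with hrdef
    have hx0 : x = (r, q - l) := by
      rw [hcells, Finset.mem_insert] at hx
      rcases hx with h | h
      · exact h
      · exfalso; apply hx'
        rw [heq]
        exact h
    have hcardS : S.card = N / k := balanced hk B i h2 (s : ℕ) s.isLt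
    have htc : contentZ (tailCell (B.stripCells i)) = (b0 : ℤ) - N + 1 := by
      apply htail
      exact isTail_tailCell (stripCells_nonempty hk B h1 h2)
    rw [htc, hx0]
    have hc : contentZ (r, q - l) = ((q : ℤ) - l) - r := by
      unfold contentZ
      simp only
      push_cast [Nat.cast_sub hlq]
      ring
    rw [hc]
    have hlrN : l + r + 1 = N / k := by omega
    have hqb : b0 = k * q + (s : ℕ) := by
      have hdm := Nat.div_add_mod b0 k
      rw [← hqdef] at hdm
      omega
    have hkq : ((k : ℤ)) * ((q : ℤ) - l - r - 1) + s = (b0 : ℤ) - N := by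
      have hNe : (k : ℤ) * ((l : ℤ) + r + 1) = (N : ℤ) := by
        have hcast : ((l + r + 1 : ℕ) : ℤ) = ((N / k : ℕ) : ℤ) := by exact_mod_cast hlrN
        have hNk2 : (k : ℤ) * ((N / k : ℕ) : ℤ) = N := by
          obtain ⟨t, ht⟩ := hNdvd
          rw [ht, Nat.mul_div_cancel_left t hk]
          push_cast
          ring
        rw [← hNk2, ← hcast]
        push_cast
        ring
      have hb0e : ((b0 : ℕ) : ℤ) = (k : ℤ) * q + s := by exact_mod_cast hqb
      have : (k : ℤ) * ((q : ℤ) - l - r - 1) = (k : ℤ) * q - (k : ℤ) * ((l : ℤ) + r + 1) := by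
        ring
      rw [this, hNe, hb0e]
      ring
    push_cast
    push_cast at hkq
    linarith [hkq]
  · exfalso
    apply hx'
    rw [hq.1 hcase]
    exact hx

end Plumbing

section Tails

lemma tail_row_lt_iff {mu nu pi : YoungDiagram}
    (h1 : mu.cells ⊆ nu.cells) (h2 : nu.cells ⊆ pi.cells)
    {t1 t2 : ℕ × ℕ} (ht1 : IsTail (nu.cells \ mu.cells) t1)
    (ht2 : IsTail (pi.cells \ nu.cells) t2) :
    t1.1 < t2.1 ↔ contentZ t2 < contentZ t1 := by
  obtain ⟨⟨r1, c1⟩, rfl⟩ : ∃ p, t1 = p := ⟨t1, rfl⟩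
  obtain ⟨⟨r2, c2⟩, rfl⟩ : ∃ p, t2 = p := ⟨t2, rfl⟩
  obtain ⟨ht1S, ht1min⟩ := ht1
  obtain ⟨ht2S, ht2min⟩ := ht2
  have h1nu : (r1, c1) ∈ nu := by
    have := (Finset.mem_sdiff.1 ht1S).1
    rwa [YoungDiagram.mem_cells] at this
  have h1mu : (r1, c1) ∉ mu := by
    have := (Finset.mem_sdiff.1 ht1S).2
    rwa [YoungDiagram.mem_cells] at this
  have h2pi : (r2, c2) ∈ pi := by
    have := (Finset.mem_sdiff.1 ht2S).1
    rwa [YoungDiagram.mem_cells] at this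
  have h2nu : (r2, c2) ∉ nu := by
    have := (Finset.mem_sdiff.1 ht2S).2
    rwa [YoungDiagram.mem_cells] at this
  -- cell below t1 is not in nu
  have hbelow : (r1 + 1, c1) ∉ nu := by
    intro hc
    by_cases hm : (r1 + 1, c1) ∈ mu
    · exact h1mu (mu.up_left_mem (by omega) le_rfl hm)
    · have hmem : (r1 + 1, c1) ∈ nu.cells \ mu.cells := by
        rw [Finset.mem_sdiff, YoungDiagram.mem_cells, YoungDiagram.mem_cells]
        exact ⟨hc, hm⟩
      have := ht1min _ hmem
      unfold contentZ at this
      simp only at this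
      push_cast at this
      omega
  -- left neighbor of t2 (if any) is in nu
  have hleft : c2 = 0 ∨ (r2, c2 - 1) ∈ nu := by
    rcases Nat.eq_zero_or_pos c2 with h | h
    · exact Or.inl h
    · right
      have hpi' : (r2, c2 - 1) ∈ pi := pi.up_left_mem le_rfl (by omega) h2pi
      by_contra hc
      have hmem : (r2, c2 - 1) ∈ pi.cells \ nu.cells := by
        rw [Finset.mem_sdiff, YoungDiagram.mem_cells, YoungDiagram.mem_cells]
        exact ⟨hpi', hc⟩
      have := ht2min _ hmem
      unfold contentZ at this
      simp only at this
      push_cast at this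
      omega
  simp only [contentZ]
  rw [YoungDiagram.mem_iff_lt_rowLen] at h1nu
  rw [YoungDiagram.mem_iff_lt_rowLen] at hbelow h2nu
  push_neg at hbelow h2nu
  constructor
  · intro hrow
    have hanti : nu.rowLen r2 ≤ nu.rowLen (r1 + 1) := nu.rowLen_anti _ _ (by omega)
    rcases hleft with h | h
    · push_cast
      omega
    · rw [YoungDiagram.mem_iff_lt_rowLen] at h
      push_cast
      omega
  · intro hcont
    by_contra hrow
    push_neg at hrow
    have hanti : nu.rowLen r1 ≤ nu.rowLen r2 := nu.rowLen_anti _ _ (by omega)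
    push_cast at hcont
    omega

lemma descent_arith {k s t cx cy : ℤ} (hk : 0 < k) (hs : 0 ≤ s) (hs' : s < k)
    (ht : 0 ≤ t) (ht' : t < k) :
    k * (cy - 1) + t < k * (cx - 1) + s ↔
      ((s ≤ t ∧ cy < cx) ∨ (t < s ∧ cy ≤ cx)) := by
  have key : k * (cy - 1) + t < k * (cx - 1) + s ↔ t - s < k * (cx - cy) := by
    constructor <;> intro h <;> nlinarith [h]
  rw [key]
  rcases lt_trichotomy (cx - cy) 0 with hA | hA | hA
  · have hA1 : cx - cy ≤ -1 := by omega
    have : k * (cx - cy) ≤ k * (-1) := by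
      apply mul_le_mul_of_nonneg_left hA1 (le_of_lt hk)
    constructor
    · intro h; omega
    · rintro (⟨_, h⟩ | ⟨_, h⟩) <;> omega
  · rw [show cx - cy = 0 from hA, mul_zero]
    constructor
    · intro h
      right
      exact ⟨by omega, by omega⟩
    · rintro (⟨hst, h⟩ | ⟨hts, h⟩) <;> omega
  · have hA1 : (1 : ℤ) ≤ cx - cy := by omega
    have : k * 1 ≤ k * (cx - cy) := by
      apply mul_le_mul_of_nonneg_left hA1 (le_of_lt hk)
    constructor
    · intro _
      rcases le_or_gt s t with h | h
      · exact Or.inl ⟨h, by omega⟩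
      · exact Or.inr ⟨h, by omega⟩
    · intro _; omega

end Tails

/-- properties of the Littlewood quotient map. If at step `i` the
quotient gains the cell `x` in component `s`, then
`c_B(i) - 1 = k (c_𝒯(i) - 1) + s`; consequently `DES(B) = DES(𝒯)` and
`height(B¹) = k - 1 - s₁`. -/
theorem littlewood_quotient_properties (k m : ℕ) (hk : 0 < k)
    (lam : YoungDiagram) (B : BST lam k m) :
    (∀ i : ℕ, 1 ≤ i → i ≤ m → ∀ s : Fin k, ∀ x : ℕ × ℕ,
      (x ∈ kQuotientCells k (B.flagAt i) s ∧
        x ∉ kQuotientCells k (B.flagAt (i - 1)) s) →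
      contentZ (tailCell (B.stripCells i)) - 1 =
        (k : ℤ) * (contentZ x - 1) + (s : ℤ)) ∧
    (∀ i : ℕ, 1 ≤ i → i + 1 ≤ m → ∀ (s t : Fin k) (x y : ℕ × ℕ),
      (x ∈ kQuotientCells k (B.flagAt i) s ∧
        x ∉ kQuotientCells k (B.flagAt (i - 1)) s) →
      (y ∈ kQuotientCells k (B.flagAt (i + 1)) t ∧
        y ∉ kQuotientCells k (B.flagAt i) t) →
      (i ∈ B.DES ↔
        ((s ≤ t ∧ contentZ y < contentZ x) ∨ (t < s ∧ contentZ y ≤ contentZ x)))) ∧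
    (∀ s : Fin k, ∀ x : ℕ × ℕ,
      (x ∈ kQuotientCells k (B.flagAt 1) s ∧
        x ∉ kQuotientCells k (B.flagAt 0) s) →
      stripHeight (B.stripCells 1) = k - 1 - (s : ℕ)) := by
  classical
  have hkz : (0 : ℤ) < (k : ℤ) := by exact_mod_cast hk
  refine ⟨?_, ?_, ?_⟩
  · rintro i hi1 him s x ⟨hx1, hx2⟩
    exact main_step hk B hi1 him hx1 hx2
  · rintro i hi1 him s t x y ⟨hx1, hx2⟩ ⟨hy1, hy2⟩
    have e1 := main_step hk B hi1 (by omega) hx1 hx2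
    have hy2' : y ∉ kQuotientCells k (B.flagAt (i + 1 - 1)) t := by
      rwa [Nat.add_sub_cancel]
    have e2 := main_step hk B (i := i + 1) (by omega) him hy1 hy2'
    have hne1 : (B.stripCells i).Nonempty := stripCells_nonempty hk B hi1 (by omega)
    have hne2 : (B.stripCells (i+1)).Nonempty := stripCells_nonempty hk B (by omega) him
    have hsub1 : (B.flagAt (i-1)).cells ⊆ (B.flagAt i).cells := flagAt_subset B (by omega)
    have hsub2 : (B.flagAt i).cells ⊆ (B.flagAt (i+1)).cells := flagAt_subset B (by omega)
    have ht2 : IsTail ((B.flagAt (i+1)).cells \ (B.flagAt i).cells)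
        (tailCell (B.stripCells (i+1))) := by
      have := isTail_tailCell hne2
      unfold BST.stripCells at this ⊢
      rwa [Nat.add_sub_cancel] at this
    have hgeo := tail_row_lt_iff hsub1 hsub2 (isTail_tailCell hne1) ht2
    have hgeo2 : (tailCell (B.stripCells i)).1 < (tailCell (B.stripCells (i+1))).1 ↔
        contentZ (tailCell (B.stripCells (i+1))) < contentZ (tailCell (B.stripCells i)) := hgeo
    have harith := descent_arith (k := (k : ℤ)) (s := ((s : ℕ) : ℤ)) (t := ((t : ℕ) : ℤ))
      (cx := contentZ x) (cy := contentZ y) hkz (by positivity)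
      (by exact_mod_cast s.isLt) (by positivity) (by exact_mod_cast t.isLt)
    have hfinle : ((s : ℕ) : ℤ) ≤ ((t : ℕ) : ℤ) ↔ s ≤ t := by
      rw [Nat.cast_le]; exact (Fin.le_def).symm
    have hfinlt : ((t : ℕ) : ℤ) < ((s : ℕ) : ℤ) ↔ t < s := by
      rw [Nat.cast_lt]; exact (Fin.lt_def).symm
    constructor
    · intro hdes
      rw [BST.DES, Finset.mem_filter] at hdes
      have hcont := hgeo2.1 hdes.2
      have hlt : (k : ℤ) * (contentZ y - 1) + ((t : ℕ) : ℤ)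
          < (k : ℤ) * (contentZ x - 1) + ((s : ℕ) : ℤ) := by linarith [e1, e2, hcont]
      rcases harith.1 hlt with ⟨h1, h2⟩ | ⟨h1, h2⟩
      · exact Or.inl ⟨hfinle.1 h1, h2⟩
      · exact Or.inr ⟨hfinlt.1 h1, h2⟩
    · intro hcond
      rw [BST.DES, Finset.mem_filter, Finset.mem_Icc]
      refine ⟨⟨hi1, by omega⟩, ?_⟩
      apply hgeo2.2
      have hlt : (k : ℤ) * (contentZ y - 1) + ((t : ℕ) : ℤ)
          < (k : ℤ) * (contentZ x - 1) + ((s : ℕ) : ℤ) := by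
        apply harith.2
        rcases hcond with ⟨h1, h2⟩ | ⟨h1, h2⟩
        · exact Or.inl ⟨hfinle.2 h1, h2⟩
        · exact Or.inr ⟨hfinlt.2 h1, h2⟩
      linarith [e1, e2, hlt]
  · rintro s x ⟨hx1, hx2⟩
    by_cases hm : m = 0
    · exfalso
      have hbot : B.flagAt 1 = ⊥ := by
        subst hm
        rw [show (1 : ℕ) = 0 + 1 by rfl]
        have : B.flagAt (0 + 1) = B.flagAt 0 := by
          unfold BST.flagAt
          congr 2
        rw [this, flagAt_zero B]
      rw [hbot, kQuotient_bot hk s] at hx1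
      exact absurd hx1 (Finset.notMem_empty x)
    · have h1m : 1 ≤ m := by omega
      set N := numRowsPad k lam with hNdef
      have hNdvd : k ∣ N := numRowsPad_dvd k lam
      have hNcol : (B.flagAt 1).colLen 0 ≤ N :=
        le_trans (flagAt_colLen_le B 1) (colLen_le_numRowsPad k hk lam)
      have hstrip := isStrip_step B (i := 1) le_rfl h1m
      obtain ⟨a, b, hab, hbN, hout, hin, hstep, hmem1, hmem2, hrel, htail, himg⟩ :=
        strip_beta hk hstrip hNcol
      have hmu0 : B.flagAt (1 - 1) = ⊥ := flagAt_zero B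
      have hmurow : ∀ j, (B.flagAt (1-1)).rowLen j = 0 := by
        intro j; rw [hmu0, rowLen_bot]
      set b0 := (B.flagAt (1-1)).rowLen b + (N - 1 - b) with hb0def
      have hb0 : b0 = N - 1 - b := by rw [hb0def, hmurow]; omega
      -- s = b0 % k
      rw [quotient_transfer B hk s 1] at hx1
      rw [quotient_transfer B hk s 0] at hx2
      have hx2' : x ∉ cellsOfBetaSet (Sdiv k N (B.flagAt (1-1)) (s : ℕ)) := hx2
      have hq := quotient_step hmem1 hmem2 hrel s.isLt
      have hcase : (s : ℕ) = b0 % k := by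
        by_contra hc
        apply hx2'
        rw [hq.1 hc]
        exact hx1
      -- a = 0
      have ha0 : a = 0 := by
        by_contra hc
        have h1 : (B.flagAt 1).rowLen 0 = 0 := by
          rw [hout 0 (Or.inl (by omega)), hmurow]
        have h2 := hin a le_rfl hab
        rw [hmurow] at h2
        have h3 : (B.flagAt 1).rowLen a ≤ (B.flagAt 1).rowLen 0 :=
          (B.flagAt 1).rowLen_anti 0 a (by omega)
        omega
      -- b ≤ k - 1
      have hcard := hstrip.2.1
      have hble : b + 1 ≤ k := by
        have h1 : ((B.flagAt 1).cells \ (B.flagAt (1-1)).cells).image Prod.fst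
            = Finset.Icc a b := himg
        have h2 := Finset.card_image_le (s := (B.flagAt 1).cells \ (B.flagAt (1-1)).cells)
          (f := Prod.fst)
        rw [h1, Nat.card_Icc, ha0] at h2
        omega
      -- s = k - 1 - b
      have hqb : b0 = k * (b0 / k) + (s : ℕ) := by
        have hdm := Nat.div_add_mod b0 k
        omega
      set q := b0 / k with hqdef
      set tN := N / k with htdef
      have hNt : N = k * tN := by
        obtain ⟨u, hu⟩ := hNdvd
        rw [htdef, hu, Nat.mul_div_cancel_left u hk]
      have heqn : k * q + (s : ℕ) + 1 + b = k * tN := by omega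
      have htq : tN = q + 1 := by
        rcases lt_trichotomy tN (q + 1) with h | h | h
        · exfalso
          have : k * tN ≤ k * q := Nat.mul_le_mul_left k (by omega)
          omega
        · exact h
        · exfalso
          have h1 : k * (q + 2) ≤ k * tN := Nat.mul_le_mul_left k (by omega)
          have h2 : k * (q + 2) = k * q + k + k := by ring
          have h3 := s.isLt
          omega
      have hs : (s : ℕ) = k - 1 - b := by
        have h1 : k * tN = k * q + k := by rw [htq]; ring
        have h3 := s.isLt
        omega
      -- stripHeight
      have himg' : (B.stripCells 1).image Prod.fst = Finset.Icc 0 b := by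
        rw [ha0] at himg
        exact himg
      rw [stripHeight, himg', Nat.card_Icc]
      omega

end BorderStrips
end
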